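/- arXiv:2401.06029 — 8 statements merged into one kernel-verified Lean document; each statement's English description precedes it below -/
import Mathlib

section
/- For all integers r ≥ 1 and Δ ≥ 2, there exist an r-graph G with maximum degree Δ and an edge-coloring of G into color classes E_1, …, E_n such that |E_i| ≥ rΔ − 1 for every i and G has no full rainbow matching with respect to E_1, …, E_n. -/
open Finset

/-- The degree of a vertex `v` in the multi-hypergraph with edge family `E`
(edges indexed by `ι`, parallel edges counted as distinct). -/
def mhDeg {V ι : Type} [Fintype ι] [DecidableEq V] (E : ι → Finset V) (v : V) : ℕ :=
  (Finset.univ.filter fun a => v ∈ E a).card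

/-- The size of the color class of color `i` under the edge-coloring `c`. -/
def classSize {ι κ : Type} [Fintype ι] [DecidableEq κ] (c : ι → κ) (i : κ) : ℕ :=
  (Finset.univ.filter fun a => c a = i).card

/-- An edge-coloring is proper if each color class is a matching. -/
def properColoring {V ι κ : Type} (E : ι → Finset V) (c : ι → κ) : Prop :=
  ∀ a b : ι, a ≠ b → c a = c b → Disjoint (E a) (E b)

/-- A full rainbow matching with respect to the coloring `c`: a set of pairwise disjoint
edges containing exactly one edge from each color class. -/
def hasFullRainbowMatching {V ι κ : Type} (E : ι → Finset V) (c : ι → κ) : Prop :=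
  ∃ f : κ → ι, (∀ i, c (f i) = i) ∧ ∀ i j : κ, i ≠ j → Disjoint (E (f i)) (E (f j))


/-!
Write `r = a + 1` and `Δ = b + 2`. Take a central `r × r` grid whose rows (side `0`) and columns
(side `1`) are edges, and for each side a chain of `L = ab + a + b` further `r × r` grids in which
every row is an edge and every column is an edge of multiplicity `b + 1`; all degrees are `2` or
`Δ`. Each side has the colours `0, …, L`: colour `t < L` consists of the `(a + 1)(b + 1)` columns
of chain grid `t` and the rows `1, …, a` of the grid preceding it (the central grid precedes
grid `0`, its rows being the lines of that side); colour `L` takes line `0` of the central grid,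
row `0` of each of the `L` chain grids and the rows `1, …, a` of the last one. So every class
has `(a + 1)(b + 1) + a = rΔ - 1` edges.

A row of chain grid `i` meets every column of grid `i`, so in a full rainbow matching the colour
of those columns is represented by a row of the preceding grid. Starting from colour `L`, this
descent ends in the central grid on both sides, where a row and a column always meet.
-/

section Relabel

variable {V V' ι ι' κ κ' : Type} [Fintype ι] [Fintype ι'] [DecidableEq V] [DecidableEq V']
  [DecidableEq κ] [DecidableEq κ']

lemma mhDeg_relabel (eι : ι ≃ ι') (eV : V ≃ V') (E : ι → Finset V) (v : V) :
    mhDeg (fun m => (E (eι.symm m)).map eV.toEmbedding) (eV v) = mhDeg E v := by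
  simp only [mhDeg, ← Fintype.card_subtype]
  exact Fintype.card_congr (eι.symm.subtypeEquiv fun m => by simp)

lemma classSize_relabel (eι : ι ≃ ι') (eκ : κ ≃ κ') (c : ι → κ) (i : κ) :
    classSize (fun m => eκ (c (eι.symm m))) (eκ i) = classSize c i := by
  simp only [classSize, ← Fintype.card_subtype]
  exact Fintype.card_congr (eι.symm.subtypeEquiv fun m => by simp)

end Relabel

lemma hasFullRainbowMatching_of_relabel {V V' ι ι' κ κ' : Type} (eι : ι ≃ ι') (eV : V ≃ V')
    (eκ : κ ≃ κ') {E : ι → Finset V} {c : ι → κ}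
    (h : hasFullRainbowMatching (fun m => (E (eι.symm m)).map eV.toEmbedding)
      (fun m => eκ (c (eι.symm m)))) :
    hasFullRainbowMatching E c := by
  obtain ⟨f, hcf, hdf⟩ := h
  refine ⟨fun i => eι.symm (f (eκ i)), fun i => eκ.injective (hcf (eκ i)), fun i j hij => ?_⟩
  simpa using hdf (eκ i) (eκ j) (eκ.injective.ne hij)

lemma card_le_classSize {ι κ D : Type} [Fintype ι] [Fintype D] [DecidableEq κ]
    {c : ι → κ} {i : κ} {g : D → ι} (hg : Function.Injective g) (hc : ∀ x, c (g x) = i) :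
    Fintype.card D ≤ classSize c i := by
  rw [classSize, ← Fintype.card_subtype]
  exact Fintype.card_le_of_injective (fun x => ⟨g x, hc x⟩) fun x y h =>
    hg (congrArg Subtype.val h)

namespace RainbowChain

variable (a b : ℕ)

abbrev chainLength : ℕ := a * b + a + b

abbrev Vertex :=
  (Fin (a + 1) × Fin (a + 1)) ⊕ (Fin 2 × Fin (chainLength a b) × Fin (a + 1) × Fin (a + 1))

abbrev Edge :=
  (Fin 2 × Fin (a + 1)) ⊕
    (Fin 2 × Fin (chainLength a b) × Fin (b + 1) × Fin (a + 1)) ⊕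
    (Fin 2 × Fin (chainLength a b) × Fin (a + 1))

abbrev Color := Fin 2 × Fin (chainLength a b + 1)

def edge : Edge a b → Finset (Vertex a b)
  | .inl (l, p) => univ.image fun k => .inl (if l = 0 then (p, k) else (k, p))
  | .inr (.inl (l, i, _, k)) => univ.image fun j => .inr (l, i, j, k)
  | .inr (.inr (l, i, j)) => univ.image fun k => .inr (l, i, j, k)

def color : Edge a b → Color a b
  | .inl (l, p) => (l, if p = 0 then Fin.last _ else 0)
  | .inr (.inl (l, i, _, _)) => (l, i.castSucc)
  | .inr (.inr (l, i, j)) => (l, if j = 0 then Fin.last _ else i.succ)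

lemma card_edge (e : Edge a b) : (edge a b e).card = a + 1 := by
  rcases e with ⟨l, p⟩ | ⟨l, i, c, k⟩ | ⟨l, i, j⟩ <;>
    rw [edge, card_image_of_injective _ ?_, card_univ, Fintype.card_fin] <;>
    intro x y h
  · split_ifs at h <;> simpa using h
  all_goals simpa using h

lemma mhDeg_edge_inl (j k : Fin (a + 1)) : mhDeg (edge a b) (.inl (j, k)) = 2 := by
  rw [mhDeg, card_filter]
  simp [Fintype.sum_sum_type, Fintype.sum_prod_type, edge, Fin.sum_univ_two, -sum_boole,
    Prod.ext_iff]

lemma mhDeg_edge_inr (l : Fin 2) (i : Fin (chainLength a b)) (j k : Fin (a + 1)) :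
    mhDeg (edge a b) (.inr (l, i, j, k)) = b + 2 := by
  rw [mhDeg, card_filter]
  simp [Fintype.sum_sum_type, Fintype.sum_prod_type, edge, -sum_boole, ite_and, sum_ite_eq']

lemma mhDeg_edge_le (v : Vertex a b) : mhDeg (edge a b) v ≤ b + 2 := by
  rcases v with ⟨j, k⟩ | ⟨l, i, j, k⟩
  · rw [mhDeg_edge_inl]; omega
  · rw [mhDeg_edge_inr]

lemma exists_mhDeg_edge_eq : ∃ v, mhDeg (edge a b) v = b + 2 := by
  rcases Nat.eq_zero_or_pos b with rfl | hb
  · exact ⟨.inl (0, 0), mhDeg_edge_inl a 0 0 0⟩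
  · exact ⟨.inr (0, ⟨0, by positivity⟩, 0, 0), mhDeg_edge_inr a b _ _ _ _⟩

def precedingRow (l : Fin 2) (t : Fin (chainLength a b + 1)) (p : Fin a) : Edge a b :=
  Fin.cases (.inl (l, p.succ)) (fun i => .inr (.inr (l, i, p.succ))) t

lemma color_precedingRow (l : Fin 2) (t : Fin (chainLength a b + 1)) (p : Fin a) :
    color a b (precedingRow a b l t p) = (l, t) := by
  cases t using Fin.cases <;> simp [precedingRow, color, Fin.succ_ne_zero]

lemma precedingRow_injective (l : Fin 2) (t : Fin (chainLength a b + 1)) :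
    Function.Injective (precedingRow a b l t) := by
  cases t using Fin.cases <;> intro p q h <;> simpa [precedingRow] using h

lemma le_classSize_color (κ : Color a b) : a * b + 2 * a + b + 1 ≤ classSize (color a b) κ := by
  obtain ⟨l, t⟩ := κ
  induction t using Fin.lastCases with
  | last =>
    have := card_le_classSize (c := color a b) (i := (l, Fin.last _))
      (g := Sum.elim (precedingRow a b l (Fin.last _))
        (Option.elim' (.inl (l, 0)) fun i => .inr (.inr (l, i, 0))))
      ((precedingRow_injective a b l _).sumElim ?_ ?_) ?_
    · rw [Fintype.card_sum, Fintype.card_option, Fintype.card_fin, Fintype.card_fin] at this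
      linarith
    · rintro (_ | i) (_ | j) h <;> simp_all
    · intro p o
      generalize Fin.last _ = t
      cases o <;> cases t using Fin.cases <;> simp [precedingRow]
    · rintro (p | _ | i)
      · exact color_precedingRow a b l _ p
      · simp [color]
      · simp [color]
  | cast i =>
    have := card_le_classSize (c := color a b) (i := (l, i.castSucc))
      (g := Sum.elim (precedingRow a b l i.castSucc)
        (fun ck : Fin (b + 1) × Fin (a + 1) => .inr (.inl (l, i, ck.1, ck.2))))
      ((precedingRow_injective a b l _).sumElim ?_ ?_) ?_
    · rw [Fintype.card_sum, Fintype.card_prod, Fintype.card_fin, Fintype.card_fin,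
        Fintype.card_fin] at this
      linarith
    · rintro ⟨_, _⟩ ⟨_, _⟩ h; simp_all
    · intro p o
      generalize i.castSucc = t
      cases t using Fin.cases <;> simp [precedingRow]
    · rintro (p | _)
      · exact color_precedingRow a b l _ p
      · simp [color]

lemma not_disjoint_row_column (l : Fin 2) (i : Fin (chainLength a b)) (j k : Fin (a + 1))
    (c : Fin (b + 1)) :
    ¬ Disjoint (edge a b (.inr (.inr (l, i, j)))) (edge a b (.inr (.inl (l, i, c, k)))) :=
  Finset.not_disjoint_iff.2 ⟨.inr (l, i, j, k), by simp [edge]⟩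

lemma not_disjoint_lines (p q : Fin (a + 1)) :
    ¬ Disjoint (edge a b (.inl (0, p))) (edge a b (.inl (1, q))) :=
  Finset.not_disjoint_iff.2 ⟨.inl (p, q), by simp [edge]⟩

section Matching

variable {a b} {f : Color a b → Edge a b}

lemma exists_line_of_row (hc : ∀ κ, color a b (f κ) = κ)
    (hd : ∀ κ κ', κ ≠ κ' → Disjoint (edge a b (f κ)) (edge a b (f κ'))) (l : Fin 2)
    (i : Fin (chainLength a b)) {t : Fin (chainLength a b + 1)} {j : Fin (a + 1)}
    (hrow : f (l, t) = .inr (.inr (l, i, j))) :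
    ∃ t p, f (l, t) = .inl (l, p) := by
  induction i using WellFoundedLT.induction generalizing t j with
  | _ i ih =>
    have hci := hc (l, i.castSucc)
    rcases hf : f (l, i.castSucc) with ⟨l', p⟩ | ⟨l', i', c, k⟩ | ⟨l', i', j'⟩ <;>
      rw [hf] at hci <;> simp only [color, Prod.mk.injEq] at hci
    · exact ⟨_, p, hci.1 ▸ hf⟩
    · obtain ⟨hl, hi⟩ := hci
      cases Fin.castSucc_injective _ hi
      have hne : (l, t) ≠ (l, i.castSucc) := fun h => by
        rw [h, hf] at hrow
        cases hrow
      have := hd _ _ hne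
      rw [hrow, hf, hl] at this
      exact (not_disjoint_row_column a b l i j k c this).elim
    · obtain ⟨hl, hi⟩ := hci
      split_ifs at hi
      · exact absurd hi.symm (Fin.castSucc_ne_last i)
      · rw [Fin.ext_iff, Fin.val_succ, Fin.val_castSucc] at hi
        exact ih i' (by rw [Fin.lt_def]; omega) (hl ▸ hf)

lemma exists_line (hc : ∀ κ, color a b (f κ) = κ)
    (hd : ∀ κ κ', κ ≠ κ' → Disjoint (edge a b (f κ)) (edge a b (f κ'))) (l : Fin 2) :
    ∃ t p, f (l, t) = .inl (l, p) := by
  have h := hc (l, Fin.last _)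
  rcases hf : f (l, Fin.last _) with ⟨l', p⟩ | ⟨l', i, c, k⟩ | ⟨l', i, j⟩ <;>
    rw [hf] at h <;> simp only [color, Prod.mk.injEq] at h
  · exact ⟨_, p, h.1 ▸ hf⟩
  · exact absurd h.2 (Fin.castSucc_ne_last i)
  · exact exists_line_of_row hc hd l i (h.1 ▸ hf)

end Matching

lemma not_hasFullRainbowMatching : ¬ hasFullRainbowMatching (edge a b) (color a b) := by
  rintro ⟨f, hc, hd⟩
  obtain ⟨t, p, hp⟩ := exists_line hc hd 0
  obtain ⟨t', q, hq⟩ := exists_line hc hd 1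
  have := hd (0, t) (1, t') (by simp)
  rw [hp, hq] at this
  exact not_disjoint_lines a b p q this

end RainbowChain

open RainbowChain

/-- For all `r ≥ 1` and `Δ ≥ 2` there is an edge-colored `r`-graph with maximum degree `Δ`,
all color classes of size at least `rΔ - 1`, and no full rainbow matching. -/
theorem stmt2 (r Δ : ℕ) (hr : 1 ≤ r) (hΔ : 2 ≤ Δ) :
    ∃ (N M n : ℕ) (E : Fin M → Finset (Fin N)) (c : Fin M → Fin n),
      (∀ a, (E a).card = r) ∧
      (∀ v, mhDeg E v ≤ Δ) ∧ (∃ v, mhDeg E v = Δ) ∧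
      (∀ i : Fin n, r * Δ - 1 ≤ classSize c i) ∧
      ¬ hasFullRainbowMatching E c := by
  obtain ⟨a, rfl⟩ : ∃ a, r = a + 1 := ⟨r - 1, by omega⟩
  obtain ⟨b, rfl⟩ : ∃ b, Δ = b + 2 := ⟨Δ - 2, by omega⟩
  let eV := Fintype.equivFin (Vertex a b)
  let eι := Fintype.equivFin (Edge a b)
  let eκ := Fintype.equivFin (Color a b)
  refine ⟨_, _, _, fun m => (edge a b (eι.symm m)).map eV.toEmbedding,
    fun m => eκ (color a b (eι.symm m)), fun m => by simp [card_edge], fun v => ?_, ?_,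
    fun i => ?_, fun h =>
      not_hasFullRainbowMatching a b (hasFullRainbowMatching_of_relabel eι eV eκ h)⟩
  · rw [← eV.apply_symm_apply v, mhDeg_relabel]
    exact mhDeg_edge_le a b _
  · obtain ⟨v, hv⟩ := exists_mhDeg_edge_eq a b
    exact ⟨eV v, by rw [mhDeg_relabel, hv]⟩
  · rw [← eκ.apply_symm_apply i, classSize_relabel]
    have := le_classSize_color a b (eκ.symm i)
    rw [show (a + 1) * (b + 2) = a * b + 2 * a + b + 1 + 1 by ring]
    omega
end

section
/- For every integer Δ ≥ 2, there exist a bipartite simple graph H and a list assignment L for the edges of H such that (H, L) has maximum color degree Δ, |L(e)| = Δ for every edge e of H, and there is no proper L-coloring of H. -/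
open Finset

/-!
Take `p = Δ` and the complete bipartite graph between centres `r : ZMod p` and positions
`(t, s) : ZMod p × ZMod p`, with colours `ZMod p × ZMod p`. A host edge `(r, t, 0)` may take any
colour `(u, t)`; any other edge `(r, t, s)` may take the colours `(t + shift r i, i)`, where
`shift r i` is `1` at `r = i = 0` and `0` elsewhere.

Every star of a centre has `p²` edges and there are only `p²` colours, so a proper colouring is a
bijection on each such star. Fix a centre `r` and `c : ZMod p`: the `p` colours `(c + shift r i, i)`
all occur at `r`, but off the host slot they fit only on the `p - 1` edges `(r, c, s)` with `s ≠ 0`,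
so one of them lies on a host edge. Hence `i ↦ (φ (r, i, 0)).1 - shift r i` is a bijection of
`ZMod p`, and the first coordinates of all host colours sum to `∑ r, (∑ x, x + ∑ i, shift r i) = 1`.
On the other hand the host edges at a position `(t, 0)` receive distinct colours `(u, t)`, so the
host edges use every colour exactly once and the same sum is `p • ∑ x, x = 0`.
-/

section ListEdgeColoring

variable {V ι κ : Type}

def IsProperListColoring (E : ι → Finset V) (L : ι → Finset κ) (φ : ι → κ) : Prop :=
  (∀ a, φ a ∈ L a) ∧ ∀ a b, a ≠ b → ¬ Disjoint (E a) (E b) → φ a ≠ φ b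

lemma IsProperListColoring.eq_of_mem {E : ι → Finset V} {L : ι → Finset κ} {φ : ι → κ}
    (hφ : IsProperListColoring E L φ) {a b : ι} {v : V} (ha : v ∈ E a) (hb : v ∈ E b)
    (h : φ a = φ b) : a = b :=
  by_contra fun hab => hφ.2 a b hab (not_disjoint_iff.2 ⟨v, ha, hb⟩) h

variable [Fintype ι] [DecidableEq V] [DecidableEq κ]

def colorDegree (E : ι → Finset V) (L : ι → Finset κ) (c : κ) (v : V) : ℕ :=
  #{a | c ∈ L a ∧ v ∈ E a}

structure IsUncolorableListInstance (Δ : ℕ) (E : ι → Finset V) (L : ι → Finset κ) : Prop where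
  card_edge : ∀ a, #(E a) = 2
  edge_injective : Function.Injective E
  bipartite : ∃ P : V → Bool, ∀ a, ∀ u ∈ E a, ∀ v ∈ E a, u ≠ v → P u ≠ P v
  colorDegree_le : ∀ c v, colorDegree E L c v ≤ Δ
  exists_colorDegree_eq : ∃ c v, colorDegree E L c v = Δ
  card_list : ∀ a, #(L a) = Δ
  not_colorable : ¬ ∃ φ, IsProperListColoring E L φ

variable {V' ι' κ' : Type} [Fintype ι'] [DecidableEq V'] [DecidableEq κ']

lemma colorDegree_map (E : ι → Finset V) (L : ι → Finset κ) (eV : V ≃ V') (eI : ι ≃ ι')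
    (eK : κ ↪ κ') (c : κ) (v : V') :
    colorDegree (fun a => (E (eI.symm a)).map eV.toEmbedding) (fun a => (L (eI.symm a)).map eK)
      (eK c) v = colorDegree E L c (eV.symm v) := by
  unfold colorDegree
  refine (card_equiv eI fun a => ?_).symm
  simp

theorem IsUncolorableListInstance.map {Δ : ℕ} {E : ι → Finset V} {L : ι → Finset κ}
    (h : IsUncolorableListInstance Δ E L) (eV : V ≃ V') (eI : ι ≃ ι') (eK : κ ↪ κ') :
    IsUncolorableListInstance Δ (fun a => (E (eI.symm a)).map eV.toEmbedding)
      (fun a => (L (eI.symm a)).map eK) where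
  card_edge a := by simp [h.card_edge]
  edge_injective a b hab := by
    simpa using h.edge_injective (map_injective _ hab)
  bipartite := by
    obtain ⟨P, hP⟩ := h.bipartite
    refine ⟨P ∘ eV.symm, fun a u hu v hv huv => ?_⟩
    rw [mem_map_equiv] at hu hv
    exact hP _ _ hu _ hv (eV.symm.injective.ne huv)
  colorDegree_le c v := by
    by_cases hc : c ∈ Set.range eK
    · obtain ⟨c, rfl⟩ := hc
      rw [colorDegree_map]
      exact h.colorDegree_le _ _
    · simp_all [colorDegree]
  exists_colorDegree_eq := by
    obtain ⟨c, v, hcv⟩ := h.exists_colorDegree_eq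
    exact ⟨eK c, eV v, by rw [colorDegree_map, Equiv.symm_apply_apply, hcv]⟩
  card_list a := by simp [h.card_list]
  not_colorable := by
    rintro ⟨φ, hφL, hφ⟩
    have hpre : ∀ a, ∃ c ∈ L a, eK c = φ (eI a) := fun a => by simpa using hφL (eI a)
    choose ψ hψL hψ using hpre
    refine h.not_colorable ⟨ψ, hψL, fun a b hab hE => ?_⟩
    have := hφ (eI a) (eI b) (eI.injective.ne hab) (by simpa using hE)
    exact fun hψab => this (by rw [← hψ, ← hψ, hψab])

end ListEdgeColoring

namespace CompleteBipartiteObstruction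

variable (p : ℕ)

abbrev Pos := ZMod p × ZMod p

abbrev Edge := ZMod p × Pos p

abbrev Vert := ZMod p ⊕ Pos p

abbrev Color := ZMod p × ZMod p

def edges (e : Edge p) : Finset (Vert p) := {.inl e.1, .inr e.2}

def shift (r i : ZMod p) : ZMod p := if r = 0 ∧ i = 0 then 1 else 0

variable {p}

@[simp]
lemma inl_mem_edges {r : ZMod p} {e : Edge p} : .inl r ∈ edges p e ↔ r = e.1 := by
  simp [edges]

@[simp]
lemma inr_mem_edges {σ : Pos p} {e : Edge p} : .inr σ ∈ edges p e ↔ σ = e.2 := by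
  simp [edges]

lemma card_edges (e : Edge p) : #(edges p e) = 2 :=
  card_pair Sum.inl_ne_inr

lemma edges_injective : Function.Injective (edges p) := by
  intro e e' h
  have h1 : .inl e.1 ∈ edges p e' := h ▸ inl_mem_edges.2 rfl
  have h2 : .inr e.2 ∈ edges p e' := h ▸ inr_mem_edges.2 rfl
  exact Prod.ext (inl_mem_edges.1 h1) (inr_mem_edges.1 h2)

variable (p) [NeZero p]

def lists (e : Edge p) : Finset (Color p) :=
  if e.2.2 = 0 then univ.image fun u => (u, e.2.1)
  else univ.image fun i => (e.2.1 + shift p e.1 i, i)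

variable {p}

lemma sum_sum_shift : ∑ r : ZMod p, ∑ i : ZMod p, shift p r i = 1 := by
  simp [shift, ite_and]

lemma sum_const_eq_zero (a : ZMod p) : ∑ _r : ZMod p, a = 0 := by
  simp

lemma mem_lists_host {c : Color p} {r t : ZMod p} : c ∈ lists p (r, t, 0) ↔ c.2 = t := by
  simp [lists, Prod.ext_iff, eq_comm]

lemma mem_lists_of_ne_zero {c : Color p} {r t s : ZMod p} (hs : s ≠ 0) :
    c ∈ lists p (r, t, s) ↔ c.1 = t + shift p r c.2 := by
  simp [lists, hs, Prod.ext_iff, eq_comm]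

lemma card_lists (e : Edge p) : #(lists p e) = p := by
  unfold lists
  split_ifs
  · rw [card_image_of_injective _ fun u u' h => (Prod.ext_iff.1 h).1, card_univ, ZMod.card]
  · rw [card_image_of_injective _ fun i i' h => (Prod.ext_iff.1 h).2, card_univ, ZMod.card]

lemma colorDegree_inl_le (c : Color p) (r : ZMod p) :
    colorDegree (edges p) (lists p) c (.inl r) ≤ p := by
  have hsub : ({e | c ∈ lists p e ∧ .inl r ∈ edges p e} : Finset (Edge p)) ⊆
      univ.image fun s => (r, if s = 0 then c.2 else c.1 - shift p r c.2, s) := by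
    rintro ⟨r', t, s⟩ he
    simp only [mem_filter, mem_univ, true_and, inl_mem_edges] at he
    obtain ⟨hc, rfl⟩ := he
    refine mem_image.2 ⟨s, mem_univ _, ?_⟩
    by_cases hs : s = 0
    · subst hs
      simp [(mem_lists_host.1 hc).symm]
    · simp [hs, mem_lists_of_ne_zero hs |>.1 hc]
  calc _ ≤ _ := card_le_card hsub
    _ ≤ #(univ : Finset (ZMod p)) := card_image_le
    _ = p := ZMod.card p

lemma colorDegree_inr_le (c : Color p) (σ : Pos p) :
    colorDegree (edges p) (lists p) c (.inr σ) ≤ p := by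
  have hsub : ({e | c ∈ lists p e ∧ .inr σ ∈ edges p e} : Finset (Edge p)) ⊆
      univ.image fun r => (r, σ) := by
    rintro ⟨r, σ'⟩ he
    simp only [mem_filter, mem_univ, true_and, inr_mem_edges] at he
    exact mem_image.2 ⟨r, mem_univ _, by rw [he.2]⟩
  calc _ ≤ _ := card_le_card hsub
    _ ≤ #(univ : Finset (ZMod p)) := card_image_le
    _ = p := ZMod.card p

lemma colorDegree_host : colorDegree (edges p) (lists p) (0, 0) (.inr (0, 0)) = p := by
  have h : ({e | (0, 0) ∈ lists p e ∧ .inr (0, 0) ∈ edges p e} : Finset (Edge p)) =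
      univ.image fun r => (r, 0, 0) := by
    ext e
    constructor
    · intro he
      simp only [mem_filter, mem_univ, true_and, inr_mem_edges] at he
      exact mem_image.2 ⟨e.1, mem_univ _, by rw [he.2]⟩
    · intro he
      obtain ⟨r, -, rfl⟩ := mem_image.1 he
      simp [mem_lists_host]
  rw [colorDegree, h, card_image_of_injective _ fun r r' h => (Prod.ext_iff.1 h).1, card_univ,
    ZMod.card]

section Coloring

variable {φ : Edge p → Color p}

lemma star_bijective (hφ : IsProperListColoring (edges p) (lists p) φ) (r : ZMod p) :
    Function.Bijective fun σ => φ (r, σ) :=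
  Finite.injective_iff_bijective.1 fun σ σ' h =>
    congrArg Prod.snd (hφ.eq_of_mem (v := .inl r) (by simp) (by simp) h)

lemma snd_host (hφ : IsProperListColoring (edges p) (lists p) φ) (r t : ZMod p) :
    (φ (r, t, 0)).2 = t :=
  mem_lists_host.1 (hφ.1 _)

lemma host_bijective (hφ : IsProperListColoring (edges p) (lists p) φ) :
    Function.Bijective fun q : ZMod p × ZMod p => φ (q.1, q.2, 0) := by
  refine Finite.injective_iff_bijective.1 fun ⟨r, t⟩ ⟨r', t'⟩ h => ?_
  obtain rfl : t = t' := by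
    rw [← snd_host hφ r t, ← snd_host hφ r' t']
    exact congrArg Prod.snd h
  have := hφ.eq_of_mem (v := .inr (t, 0)) (by simp) (by simp) h
  simp_all

lemma sum_fst_host (hφ : IsProperListColoring (edges p) (lists p) φ) :
    ∑ q : ZMod p × ZMod p, (φ (q.1, q.2, 0)).1 = 0 := by
  rw [(host_bijective hφ).sum_comp fun c : Color p => c.1, Fintype.sum_prod_type_right]
  exact sum_const_eq_zero (∑ u : ZMod p, u)

lemma eq_and_ne_zero_of_eq_color (hφ : IsProperListColoring (edges p) (lists p) φ)
    {r t s j c : ZMod p} (h : φ (r, t, s) = (c + shift p r j, j))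
    (hc : (φ (r, j, 0)).1 - shift p r j ≠ c) : t = c ∧ s ≠ 0 := by
  by_cases hs : s = 0
  · subst hs
    obtain rfl : t = j := by rw [← snd_host hφ r t, h]
    simp [h] at hc
  · have := (mem_lists_of_ne_zero hs).1 (h ▸ hφ.1 (r, t, s))
    exact ⟨(add_right_cancel this).symm, hs⟩

lemma host_offset_surjective (hφ : IsProperListColoring (edges p) (lists p) φ) (r : ZMod p) :
    Function.Surjective fun i => (φ (r, i, 0)).1 - shift p r i := by
  intro c
  by_contra! hc
  choose σ hσ using fun j => (star_bijective hφ r).2 (c + shift p r j, j)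
  have hσc := fun j => eq_and_ne_zero_of_eq_color hφ (hσ j) (hc j)
  have hinj : Function.Injective fun j => (σ j).2 := fun j j' h => by
    have := congrArg (fun σ => (φ (r, σ)).2) (Prod.ext ((hσc j).1.trans (hσc j').1.symm) h)
    simpa [hσ] using this
  obtain ⟨j, hj⟩ := Finite.surjective_of_injective hinj 0
  exact (hσc j).2 hj

lemma sum_fst_host_eq_one (hφ : IsProperListColoring (edges p) (lists p) φ) :
    ∑ q : ZMod p × ZMod p, (φ (q.1, q.2, 0)).1 = 1 := by
  have hrow (r : ZMod p) : ∑ i, (φ (r, i, 0)).1 = ∑ x : ZMod p, x + ∑ i, shift p r i := by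
    have hbij := Finite.surjective_iff_bijective.1 (host_offset_surjective hφ r)
    calc ∑ i, (φ (r, i, 0)).1 = ∑ i, ((φ (r, i, 0)).1 - shift p r i + shift p r i) := by
          simp only [sub_add_cancel]
      _ = _ := by rw [sum_add_distrib, hbij.sum_comp fun x => x]
  rw [Fintype.sum_prod_type, sum_congr rfl fun r _ => hrow r, sum_add_distrib, sum_sum_shift,
    sum_const_eq_zero, zero_add]

theorem not_exists_isProperListColoring [Fact (1 < p)] :
    ¬ ∃ φ, IsProperListColoring (edges p) (lists p) φ := by
  rintro ⟨φ, hφ⟩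
  exact zero_ne_one ((sum_fst_host hφ).symm.trans (sum_fst_host_eq_one hφ))

end Coloring

theorem isUncolorableListInstance [Fact (1 < p)] :
    IsUncolorableListInstance p (edges p) (lists p) where
  card_edge := card_edges
  edge_injective := edges_injective
  bipartite := ⟨Sum.isLeft, fun e u hu v hv huv => by
    simp only [edges, mem_insert, mem_singleton] at hu hv
    rcases hu with rfl | rfl <;> rcases hv with rfl | rfl <;> simp_all⟩
  colorDegree_le c v := by
    cases v
    exacts [colorDegree_inl_le c _, colorDegree_inr_le c _]
  exists_colorDegree_eq := ⟨_, _, colorDegree_host⟩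
  card_list := card_lists
  not_colorable := not_exists_isProperListColoring

end CompleteBipartiteObstruction

/-- For every `Δ ≥ 2` there are a bipartite simple graph `H` and a list assignment `L` for
its edges with maximum color degree `Δ`, all lists of size exactly `Δ`, and no proper
`L`-coloring. -/
theorem stmt10 (Δ : ℕ) (hΔ : 2 ≤ Δ) :
    ∃ (N M : ℕ) (E : Fin M → Finset (Fin N)) (L : Fin M → Finset ℕ),
      (∀ a, (E a).card = 2) ∧
      (∀ a b, a ≠ b → E a ≠ E b) ∧
      (∃ P : Fin N → Bool, ∀ a, ∀ u ∈ E a, ∀ v ∈ E a, u ≠ v → P u ≠ P v) ∧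
      (∀ (col : ℕ) (v : Fin N),
        (Finset.univ.filter fun a => col ∈ L a ∧ v ∈ E a).card ≤ Δ) ∧
      (∃ (col : ℕ) (v : Fin N),
        (Finset.univ.filter fun a => col ∈ L a ∧ v ∈ E a).card = Δ) ∧
      (∀ a, (L a).card = Δ) ∧
      ¬ ∃ φ : Fin M → ℕ, (∀ a, φ a ∈ L a) ∧
          ∀ a b : Fin M, a ≠ b → ¬ Disjoint (E a) (E b) → φ a ≠ φ b := by
  have : NeZero Δ := ⟨by omega⟩
  have : Fact (1 < Δ) := ⟨hΔ⟩
  have h := (CompleteBipartiteObstruction.isUncolorableListInstance (p := Δ)).map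
    (Fintype.equivFin _) (Fintype.equivFin _)
    ((Fintype.equivFin _).toEmbedding.trans Fin.valEmbedding)
  exact ⟨_, _, _, _, h.card_edge, fun _ _ => h.edge_injective.ne, h.bipartite, h.colorDegree_le,
    h.exists_colorDegree_eq, h.card_list, h.not_colorable⟩
end

section
/- Let G and H be multi-hypergraphs on disjoint vertex sets, let P = {E_1, …, E_m} be the color classes of an edge-coloring of G, and let Q = {F_1, …, F_n} be the color classes of an edge-coloring of H. Let R = {E_1', …, E_m', F_1, …, F_{n−1}} be the color classes of an edge-coloring of the disjoint union G ∪ H, where E_1' ⊇ E_1, …, E_m' ⊇ E_m are obtained by distributing each edge of F_n into one of the classes E_1, …, E_m arbitrarily. If G has no full rainbow matching with respect to P and H has no full rainbow matching with respect to Q, then G ∪ H has no full rainbow matching with respect to R. -/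
/-!
A full rainbow matching of `G ∪ H` picks one edge for each of the colors `E_1', …, E_m'`.
If all of them are edges of `G`, they form a full rainbow matching of `G`. Otherwise some
`E_i'` is represented by an edge of `H`, necessarily one of `F_n`; together with the edges
chosen for `F_1, …, F_{n-1}`, which lie in `H`, it is a full rainbow matching of `H`.
-/

open Finset

open Function

section Transfer

variable {V V' ι ι' κ κ' : Type} {E : ι → Finset V} {E' : ι' → Finset V'} {c' : ι' → κ'}

theorem hasFullRainbowMatching_of_factor (e : ι' → ι)
    (he : ∀ a b, Disjoint (E (e a)) (E (e b)) → Disjoint (E' a) (E' b))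
    {f : κ → ι} (hf : ∀ i j, i ≠ j → Disjoint (E (f i)) (E (f j)))
    {τ : κ' → κ} (hτ : Injective τ) (hsel : ∀ k, ∃ a, f (τ k) = e a ∧ c' a = k) :
    hasFullRainbowMatching E' c' := by
  choose g hfg hcg using hsel
  refine ⟨g, hcg, fun k l hkl => he _ _ ?_⟩
  rw [← hfg, ← hfg]
  exact hf _ _ (hτ.ne hkl)

end Transfer

section Join

variable {VG VH ιG ιH : Type} {m n : ℕ} (EG : ιG → Finset VG) (EH : ιH → Finset VH)
  (cG : ιG → Fin m) (cH : ιH → Fin (n + 1)) (d : ιH → Fin m)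

def joinEdges : ιG ⊕ ιH → Finset (VG ⊕ VH) :=
  Sum.elim (fun a => (EG a).map ⟨Sum.inl, Sum.inl_injective⟩)
    (fun b => (EH b).map ⟨Sum.inr, Sum.inr_injective⟩)

/-- The coloring `R`: `Sum.inl i` is the class `E_i'`, `Sum.inr j` the class `F_j`. -/
def joinColoring : ιG ⊕ ιH → Fin m ⊕ Fin n :=
  Sum.elim (fun a => Sum.inl (cG a))
    (fun b => if h : (cH b : ℕ) < n then Sum.inr ⟨cH b, h⟩ else Sum.inl (d b))

@[simp]
theorem disjoint_joinEdges_inl (a a' : ιG) :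
    Disjoint (joinEdges EG EH (.inl a)) (joinEdges EG EH (.inl a')) ↔ Disjoint (EG a) (EG a') :=
  disjoint_map _

@[simp]
theorem disjoint_joinEdges_inr (b b' : ιH) :
    Disjoint (joinEdges EG EH (.inr b)) (joinEdges EG EH (.inr b')) ↔ Disjoint (EH b) (EH b') :=
  disjoint_map _

variable {cG cH d}

theorem joinColoring_inr_eq_inr_iff {b : ιH} {j : Fin n} :
    joinColoring cG cH d (.inr b) = .inr j ↔ cH b = j.castSucc := by
  simp only [joinColoring, Sum.elim_inr, Fin.ext_iff, Fin.val_castSucc]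
  split_ifs with h
  · simp [Fin.ext_iff]
  · simp only [false_iff]
    omega

theorem joinColoring_inr_eq_inl {b : ιH} {i : Fin m}
    (h : joinColoring cG cH d (.inr b) = .inl i) : cH b = Fin.last n := by
  simp only [joinColoring, Sum.elim_inr] at h
  split_ifs at h with hlt
  exact Fin.ext (by have := (cH b).isLt; simp only [Fin.val_last]; omega)

variable {EG EH} {f : Fin m ⊕ Fin n → ιG ⊕ ιH}
  (hc : ∀ k, joinColoring cG cH d (f k) = k)
  (hd : ∀ k l, k ≠ l → Disjoint (joinEdges EG EH (f k)) (joinEdges EG EH (f l)))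
include hc hd

theorem hasFullRainbowMatching_left_of_join (hleft : ∀ i, ∃ a, f (.inl i) = .inl a) :
    hasFullRainbowMatching EG cG := by
  refine hasFullRainbowMatching_of_factor Sum.inl (fun a b => (disjoint_joinEdges_inl EG EH a b).1)
    hd Sum.inl_injective fun i => ?_
  obtain ⟨a, ha⟩ := hleft i
  refine ⟨a, ha, ?_⟩
  simpa [ha, joinColoring] using hc (.inl i)

theorem hasFullRainbowMatching_right_of_join {i : Fin m} {b : ιH} (hb : f (.inl i) = .inr b) :
    hasFullRainbowMatching EH cH := by
  have hτ : Injective (Fin.lastCases (.inl i) Sum.inr : Fin (n + 1) → Fin m ⊕ Fin n) := by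
    intro k l
    induction k using Fin.lastCases <;> induction l using Fin.lastCases <;> simp
  refine hasFullRainbowMatching_of_factor Sum.inr (fun a b => (disjoint_joinEdges_inr EG EH a b).1)
    hd hτ fun k => ?_
  induction k using Fin.lastCases with
  | last =>
    have hcb : joinColoring cG cH d (.inr b) = .inl i := by simpa [hb] using hc (.inl i)
    exact ⟨b, by simpa using hb, joinColoring_inr_eq_inl hcb⟩
  | cast j =>
    have hcj := hc (.inr j)
    rcases hfj : f (.inr j) with a | bj
    · simp [hfj, joinColoring] at hcj
    · rw [hfj] at hcj
      exact ⟨bj, by simpa using hfj, joinColoring_inr_eq_inr_iff.1 hcj⟩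

end Join

theorem stmt11_general {VG VH ιG ιH : Type} (m n : ℕ)
    (EG : ιG → Finset VG) (EH : ιH → Finset VH)
    (cG : ιG → Fin m) (cH : ιH → Fin (n + 1))
    (d : ιH → Fin m)
    (hG : ¬ hasFullRainbowMatching EG cG)
    (hH : ¬ hasFullRainbowMatching EH cH) :
    ¬ hasFullRainbowMatching
      (Sum.elim
        (fun a => (EG a).map ⟨Sum.inl, Sum.inl_injective⟩)
        (fun b => (EH b).map ⟨Sum.inr, Sum.inr_injective⟩) :
        ιG ⊕ ιH → Finset (VG ⊕ VH))
      (Sum.elim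
        (fun a => (Sum.inl (cG a) : Fin m ⊕ Fin n))
        (fun b => if h : (cH b : ℕ) < n then Sum.inr ⟨cH b, h⟩ else Sum.inl (d b))) := by
  show ¬ hasFullRainbowMatching (joinEdges EG EH) (joinColoring cG cH d)
  rintro ⟨f, hc, hd⟩
  by_cases hleft : ∀ i, ∃ a, f (.inl i) = .inl a
  · exact hG (hasFullRainbowMatching_left_of_join hc hd hleft)
  push Not at hleft
  obtain ⟨i, hi⟩ := hleft
  rcases hfi : f (.inl i) with a | b
  · exact absurd hfi (hi a)
  · exact hH (hasFullRainbowMatching_right_of_join hc hd hfi)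

/-- The joining lemma: given edge-colored multi-hypergraphs `G` (with `m` classes) and `H`
(with `n + 1` classes), neither having a full rainbow matching, the disjoint union `G ∪ H`,
colored by keeping the classes of `G` and the first `n` classes of `H` and distributing the
edges of the last class of `H` among the classes of `G` (via `d`), has no full rainbow
matching. -/
theorem stmt11 {VG VH ιG ιH : Type} (m n : ℕ)
    (EG : ιG → Finset VG) (EH : ιH → Finset VH)
    (hneG : ∀ a, (EG a).Nonempty) (hneH : ∀ b, (EH b).Nonempty)
    (cG : ιG → Fin m) (cH : ιH → Fin (n + 1))
    (d : ιH → Fin m)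
    (hG : ¬ hasFullRainbowMatching EG cG)
    (hH : ¬ hasFullRainbowMatching EH cH) :
    ¬ hasFullRainbowMatching
      (Sum.elim
        (fun a => (EG a).map ⟨Sum.inl, Sum.inl_injective⟩)
        (fun b => (EH b).map ⟨Sum.inr, Sum.inr_injective⟩) :
        ιG ⊕ ιH → Finset (VG ⊕ VH))
      (Sum.elim
        (fun a => (Sum.inl (cG a) : Fin m ⊕ Fin n))
        (fun b => if h : (cH b : ℕ) < n then Sum.inr ⟨cH b, h⟩ else Sum.inl (d b))) :=
  stmt11_general m n EG EH cG cH d hG hH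
end

section
/- Let H be a multi-hypergraph and let Q = {F_1, …, F_m} be the color classes of an edge-coloring of H such that H has no full rainbow matching with respect to Q. Suppose the integer q ≥ 1 satisfies Σ_{i∈I} |F_i| ≥ q(|I| − 1) + 1 for every subset I ⊆ {1,…,m}. Then there exist an integer k ≥ 1 and an edge-coloring of the multi-hypergraph H^k (the disjoint union of k copies of H) into color classes E_1, …, E_{k(m−1)+1} such that |E_i| ≥ q for every i and H^k has no full rainbow matching with respect to E_1, …, E_{k(m−1)+1}. -/
open Finset

/-!
The copies of `H` are indexed by the nodes of the complete `m`-ary tree of height `q` (words of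
length `< q` over `Fin m`) and the colour classes by its `m ^ q` leaves; an edge of colour `ε` in
the copy at node `u` is coloured by a leaf below `u ++ [ε]`.

A full rainbow matching picks an edge for every leaf. By downward induction on `u`, some leaf
below `u` picks an edge of a copy strictly above `u`: otherwise, for every `ε`, some leaf below
`u ++ [ε]` picks an edge of colour `ε` in the copy at `u`, and these `m` edges form a full rainbow
matching of `H`. At the root this is absurd.

For the class sizes the edges are routed greedily down the tree so that every node at depth `d`
receives at least `d` edges from its ancestors. Applied to the colours `ε` with `|F_ε| ≤ d`, the
hypothesis gives `∑ ε, (d + 1 - |F_ε|) ≤ d`, so these edges can be shared among the children such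
that, together with the node's own edges of colour `ε`, child `ε` receives at least `d + 1`.
A leaf, at depth `q`, thus receives at least `q` edges.
-/

theorem List.IsPrefix.eq_of_prefix_of_length_eq {α : Type*} {l₁ l₂ l : List α} (h₁ : l₁ <+: l)
    (h₂ : l₂ <+: l) (hlen : l₁.length = l₂.length) : l₁ = l₂ :=
  (List.prefix_of_prefix_length_le h₁ h₂ hlen.le).eq_of_length hlen

theorem List.IsPrefix.exists_append_singleton_prefix {α : Type*} {u v : List α} (h : u <+: v)
    (hlen : u.length < v.length) : ∃ a, u ++ [a] <+: v := by
  obtain ⟨w, rfl⟩ := h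
  cases w with
  | nil => simp at hlen
  | cons a w => exact ⟨a, w, by simp⟩

theorem Finset.exists_le_card_filter_eq {α β : Type*} [DecidableEq β] [Nonempty β]
    (r : β → ℕ) (K : Finset β) (X : Finset α) (h : ∑ b ∈ K, r b ≤ #X) :
    ∃ σ : α → β, ∀ b ∈ K, r b ≤ #{x ∈ X | σ x = b} := by
  classical
  induction K using Finset.induction_on generalizing X with
  | empty => exact ⟨fun _ => Classical.arbitrary β, by simp⟩
  | insert b K hb ih =>
    rw [sum_insert hb] at h
    obtain ⟨Y, hYX, hY⟩ := exists_subset_card_eq (le_of_add_le_left h)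
    obtain ⟨σ, hσ⟩ := ih (X \ Y) (by rw [card_sdiff_of_subset hYX]; omega)
    refine ⟨fun x => if x ∈ Y then b else σ x, fun b' hb' => ?_⟩
    rcases mem_insert.mp hb' with rfl | hb'
    · calc r b' = #Y := hY.symm
        _ ≤ _ := card_le_card fun x hx => by simp [hYX hx, hx]
    · refine (hσ b' hb').trans (card_le_card fun x hx => ?_)
      simp only [mem_filter, mem_sdiff] at hx ⊢
      simp [hx]

theorem sum_tsub_le_of_forall_sum_ge {κ : Type*} [Fintype κ] (w : κ → ℕ) {q : ℕ}
    (hsum : ∀ I : Finset κ, (q : ℤ) * (#I - 1) + 1 ≤ ∑ i ∈ I, (w i : ℤ)) {d : ℕ} (hd : d < q) :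
    ∑ i, (d + 1 - w i) ≤ d := by
  rw [← sum_filter_of_ne (p := fun i => w i ≤ d + 1) fun i _ h => by omega]
  set P := univ.filter fun i => w i ≤ d + 1
  rcases P.eq_empty_or_nonempty with hP | hP
  · simp [hP]
  have hcast : ((∑ i ∈ P, (d + 1 - w i) : ℕ) : ℤ) = (d + 1) * #P - ∑ i ∈ P, (w i : ℤ) := by
    rw [Nat.cast_sum, sum_congr rfl fun i hi => Nat.cast_sub (mem_filter.mp hi).2,
      sum_sub_distrib, sum_const, nsmul_eq_mul]
    push_cast
    ring
  have hPcard : (1 : ℤ) ≤ #P := by exact_mod_cast card_pos.mpr hP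
  have hdq : (d : ℤ) + 1 ≤ q := by exact_mod_cast hd
  have : ((∑ i ∈ P, (d + 1 - w i) : ℕ) : ℤ) ≤ d := by
    rw [hcast]
    nlinarith [hsum P]
  exact_mod_cast this

theorem hasFullRainbowMatching_of_isEmpty {V ι κ : Type} [IsEmpty κ] (E : ι → Finset V)
    (c : ι → κ) : hasFullRainbowMatching E c :=
  ⟨isEmptyElim, isEmptyElim, isEmptyElim⟩

namespace RainbowBlowup

variable {m : ℕ}

def subtree (u : List (Fin m)) : ℕ → Finset (List (Fin m))
  | 0 => ∅
  | n + 1 => insert u (univ.biUnion fun ε => subtree (u ++ [ε]) n)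

theorem mem_subtree {u v : List (Fin m)} {n : ℕ} :
    v ∈ subtree u n ↔ u <+: v ∧ v.length < u.length + n := by
  induction n generalizing u with
  | zero => simpa [subtree] using List.IsPrefix.length_le
  | succ n ih =>
    simp only [subtree, mem_insert, mem_biUnion, mem_univ, true_and, ih, List.length_append,
      List.length_singleton]
    constructor
    · rintro (rfl | ⟨ε, hε, hlen⟩)
      · exact ⟨List.prefix_refl v, by omega⟩
      · exact ⟨(List.prefix_append u [ε]).trans hε, by omega⟩
    · rintro ⟨hp, hlen⟩
      by_cases hv : v = u
      · exact Or.inl hv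
      · have hlt : u.length < v.length :=
          lt_of_le_of_ne hp.length_le fun h => hv (hp.eq_of_length h).symm
        obtain ⟨ε, hε⟩ := hp.exists_append_singleton_prefix hlt
        exact Or.inr ⟨ε, hε, by omega⟩

theorem card_subtree (u : List (Fin m)) (n : ℕ) : #(subtree u n) = ∑ i ∈ range n, m ^ i := by
  induction n generalizing u with
  | zero => simp [subtree]
  | succ n ih =>
    have hu : u ∉ univ.biUnion fun ε => subtree (u ++ [ε]) n := by
      simp only [mem_biUnion, mem_univ, true_and, mem_subtree, not_exists, not_and]
      exact fun ε h => absurd h.length_le (by simp)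
    have hdisj : ((univ : Finset (Fin m)) : Set (Fin m)).PairwiseDisjoint
        fun ε => subtree (u ++ [ε]) n := by
      intro ε _ ε' _ hne
      refine disjoint_left.mpr fun v hv hv' => hne ?_
      simpa using (mem_subtree.mp hv).1.eq_of_prefix_of_length_eq (mem_subtree.mp hv').1 (by simp)
    rw [subtree, card_insert_of_notMem hu, card_biUnion hdisj]
    simp [ih, sum_range_succ', pow_succ', mul_sum, add_comm]

theorem card_subtree_mul_add_one (hm : 0 < m) (u : List (Fin m)) (n : ℕ) :
    #(subtree u n) * (m - 1) + 1 = m ^ n := by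
  obtain ⟨m, rfl⟩ := Nat.exists_eq_add_of_lt hm
  simpa [card_subtree] using geom_sum_mul_add m n

section Routing

variable {ι : Type} [Fintype ι] (cH : ι → Fin m)

def rootEdges (u : List (Fin m)) (ε : Fin m) : Finset (List (Fin m) × ι) :=
  ({a | cH a = ε} : Finset ι).map (Function.Embedding.sectR u ι)

theorem mem_rootEdges {u : List (Fin m)} {ε : Fin m} {e : List (Fin m) × ι} :
    e ∈ rootEdges cH u ε ↔ e.1 = u ∧ cH e.2 = ε := by
  constructor
  · simp only [rootEdges, mem_map, mem_filter, mem_univ, true_and, Function.Embedding.sectR_apply]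
    rintro ⟨a, rfl, rfl⟩
    exact ⟨rfl, rfl⟩
  · rintro ⟨h1, h2⟩
    exact mem_map.mpr ⟨e.2, by simpa using h2, by simp [← h1]⟩

variable [DecidableEq ι]

/-- The tokens `X` are edges of copies above `u` that are handed down to `u`. -/
structure IsRouting (q : ℕ) (u : List (Fin m)) (n : ℕ) (X : Finset (List (Fin m) × ι))
    (ψ : List (Fin m) × ι → List.Vector (Fin m) q) : Prop where
  prefix_of_mem_tokens : ∀ e ∈ X, u <+: (ψ e).1
  prefix_of_mem_subtree : ∀ e ∈ subtree u n ×ˢ univ, e.1 ++ [cH e.2] <+: (ψ e).1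
  le_card_fiber : ∀ t : List.Vector (Fin m) q, u <+: t.1 →
    q ≤ #{e ∈ X ∪ subtree u n ×ˢ univ | ψ e = t}

variable (X : Finset (List (Fin m) × ι)) (σ : List (Fin m) × ι → Fin m) (u : List (Fin m))

def childTokens (ε : Fin m) : Finset (List (Fin m) × ι) :=
  {e ∈ X | σ e = ε} ∪ rootEdges cH u ε

def childOf (e : List (Fin m) × ι) : Fin m :=
  if e ∈ X then σ e else (e.1.drop u.length).headD (cH e.2)

variable {X u}

theorem card_childTokens (hX : ∀ e ∈ X, e.1.length < u.length) (ε : Fin m) :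
    #(childTokens cH X σ u ε) = #{e ∈ X | σ e = ε} + classSize cH ε := by
  have hdisj : Disjoint {e ∈ X | σ e = ε} (rootEdges cH u ε) :=
    disjoint_left.mpr fun e he he' => by
      have := hX e (mem_filter.mp he).1
      rw [((mem_rootEdges cH).mp he').1] at this
      exact this.false
  rw [childTokens, card_union_of_disjoint hdisj, rootEdges, card_map]
  rfl

theorem length_lt_of_mem_childTokens (hX : ∀ e ∈ X, e.1.length < u.length) {ε : Fin m}
    {e : List (Fin m) × ι} (he : e ∈ childTokens cH X σ u ε) : e.1.length < u.length + 1 := by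
  rcases mem_union.mp he with he | he
  · exact (hX e (mem_filter.mp he).1).trans (Nat.lt_succ_self _)
  · simp [((mem_rootEdges cH).mp he).1]

theorem childOf_eq (hX : ∀ e ∈ X, e.1.length < u.length) {n : ℕ} {ε : Fin m}
    {e : List (Fin m) × ι} (he : e ∈ childTokens cH X σ u ε ∪ subtree (u ++ [ε]) n ×ˢ univ) :
    childOf cH X σ u e = ε := by
  have not_mem (h : u.length ≤ e.1.length) : e ∉ X := fun hx => (hX e hx).not_ge h
  rcases mem_union.mp he with he | he
  · rcases mem_union.mp he with he | he
    · simpa [childOf, (mem_filter.mp he).1] using (mem_filter.mp he).2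
    · obtain ⟨h1, h2⟩ := (mem_rootEdges cH).mp he
      simp [childOf, not_mem (congrArg List.length h1).ge, h1, h2]
  · obtain ⟨w, hw⟩ := (mem_subtree.mp (mem_product.mp he).1).1
    have : u.length ≤ e.1.length := by simp [← hw]
    simp [childOf, not_mem this, ← hw]

theorem subset_tokens_union_subtree {n : ℕ} (ε : Fin m) :
    childTokens cH X σ u ε ∪ subtree (u ++ [ε]) n ×ˢ univ ⊆ X ∪ subtree u (n + 1) ×ˢ univ := by
  intro e he
  simp only [subtree, mem_union, mem_product, mem_insert, mem_biUnion, mem_univ, true_and,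
    and_true]
  rcases mem_union.mp he with he | he
  · rcases mem_union.mp he with he | he
    · exact Or.inl (mem_filter.mp he).1
    · exact Or.inr (Or.inl ((mem_rootEdges cH).mp he).1)
  · exact Or.inr (Or.inr ⟨ε, (mem_product.mp he).1⟩)

theorem IsRouting.glue {q n : ℕ} (hX : ∀ e ∈ X, e.1.length < u.length) (hu : u.length < q)
    {ψ : Fin m → List (Fin m) × ι → List.Vector (Fin m) q}
    (hψ : ∀ ε, IsRouting cH q (u ++ [ε]) n (childTokens cH X σ u ε) (ψ ε)) :
    IsRouting cH q u (n + 1) X fun e => ψ (childOf cH X σ u e) e := by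
  have hchild {ε : Fin m} {e : List (Fin m) × ι} (he : e ∈ childTokens cH X σ u ε) :
      ψ (childOf cH X σ u e) e = ψ ε e := by
    rw [childOf_eq cH σ hX (n := n) (mem_union_left _ he)]
  refine ⟨fun e he => ?_, fun e he => ?_, fun t ht => ?_⟩
  · have he' : e ∈ childTokens cH X σ u (σ e) := mem_union_left _ (mem_filter.mpr ⟨he, rfl⟩)
    rw [hchild he']
    exact (List.prefix_append u _).trans ((hψ _).prefix_of_mem_tokens e he')
  · simp only [subtree, mem_product, mem_insert, mem_biUnion, mem_univ, true_and] at he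
    rcases he with ⟨hu | ⟨ε, hε⟩, -⟩
    · have he' : e ∈ childTokens cH X σ u (cH e.2) :=
        mem_union_right _ ((mem_rootEdges cH).mpr ⟨hu, rfl⟩)
      rw [hchild he', hu]
      exact (hψ _).prefix_of_mem_tokens e he'
    · have he' : e ∈ subtree (u ++ [ε]) n ×ˢ univ := mem_product.mpr ⟨hε, mem_univ _⟩
      rw [childOf_eq cH σ hX (mem_union_right _ he')]
      exact (hψ ε).prefix_of_mem_subtree e he'
  · obtain ⟨ε, hε⟩ := ht.exists_append_singleton_prefix (by simpa [t.2] using hu)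
    refine ((hψ ε).le_card_fiber t hε).trans (card_le_card fun e he => ?_)
    obtain ⟨he, hψe⟩ := mem_filter.mp he
    exact mem_filter.mpr ⟨subset_tokens_union_subtree cH σ ε he,
      by rwa [childOf_eq cH σ hX he]⟩

theorem exists_isRouting (hm : 0 < m) {q : ℕ}
    (hslack : ∀ d < q, ∑ ε, (d + 1 - classSize cH ε) ≤ d) (n : ℕ) :
    ∀ (u : List (Fin m)) (X : Finset (List (Fin m) × ι)), u.length + n = q → u.length ≤ #X →
      (∀ e ∈ X, e.1.length < u.length) → ∃ ψ, IsRouting cH q u n X ψ := by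
  induction n with
  | zero =>
    rintro u X rfl hX -
    let leaf : List.Vector (Fin m) (u.length + 0) := ⟨u, rfl⟩
    refine ⟨fun _ => leaf, fun _ _ => List.prefix_refl u, by simp [subtree], fun t ht => ?_⟩
    obtain rfl : leaf = t := Subtype.ext (ht.eq_of_length (by simp))
    simpa [subtree] using hX
  | succ n ih =>
    intro u X hq hX hXlen
    have : Nonempty (Fin m) := ⟨⟨0, hm⟩⟩
    obtain ⟨σ, hσ⟩ := exists_le_card_filter_eq (fun ε => u.length + 1 - classSize cH ε) univ X
      ((hslack u.length (by omega)).trans hX)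
    have hchild (ε : Fin m) :
        ∃ ψ, IsRouting cH q (u ++ [ε]) n (childTokens cH X σ u ε) ψ := by
      refine ih _ _ (by rw [List.length_append, List.length_singleton]; omega) ?_ fun e he => ?_
      · have := hσ ε (mem_univ ε)
        rw [card_childTokens cH σ hXlen, List.length_append, List.length_singleton]
        omega
      · simpa using length_lt_of_mem_childTokens cH σ hXlen he
    choose ψ hψ using hchild
    exact ⟨_, IsRouting.glue cH σ hXlen (by omega) hψ⟩

end Routing

theorem exists_leaf_below_of_not_hasFullRainbowMatching {ι V : Type} {E : ι → Finset V}
    {cH : ι → Fin m} (hH : ¬ hasFullRainbowMatching E cH) {q : ℕ}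
    {F : List.Vector (Fin m) q → List (Fin m) × ι} (hF : ∀ t, (F t).1 ++ [cH (F t).2] <+: t.1)
    (hdisj : ∀ t t', t ≠ t' → (F t).1 = (F t').1 → Disjoint (E (F t).2) (E (F t').2)) (n : ℕ) :
    ∀ u : List (Fin m), u.length + n = q → ∃ t, u <+: t.1 ∧ (F t).1.length < u.length := by
  induction n with
  | zero =>
    intro u hu
    refine ⟨⟨u, hu⟩, List.prefix_refl u, ?_⟩
    simpa using (hF ⟨u, hu⟩).length_le
  | succ n ih =>
    intro u hu
    choose T hTu hTlen using fun ε : Fin m =>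
      ih (u ++ [ε]) (by rw [List.length_append, List.length_singleton]; omega)
    by_contra! hall
    have hnode (ε : Fin m) : (F (T ε)).1 = u := by
      have hge := hall (T ε) ((List.prefix_append u [ε]).trans (hTu ε))
      have hlt := hTlen ε
      rw [List.length_append, List.length_singleton] at hlt
      exact ((List.prefix_append _ _).trans (hF (T ε))).eq_of_prefix_of_length_eq
        ((List.prefix_append u [ε]).trans (hTu ε)) (by omega)
    have hcolor (ε : Fin m) : cH (F (T ε)).2 = ε := by
      simpa [hnode] using (hF (T ε)).eq_of_prefix_of_length_eq (hTu ε) (by simp [hnode])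
    refine hH ⟨fun ε => (F (T ε)).2, hcolor, fun ε ε' hne => hdisj _ _ (fun hT => hne ?_) ?_⟩
    · exact List.singleton_inj.mp <| List.append_cancel_left <|
        (hTu ε).eq_of_prefix_of_length_eq (hT ▸ hTu ε') (by simp)
    · rw [hnode, hnode]

theorem hasFullRainbowMatching_of_leaf_selection {ι V : Type} {E : ι → Finset V}
    {cH : ι → Fin m} {q : ℕ} (F : List.Vector (Fin m) q → List (Fin m) × ι)
    (hF : ∀ t, (F t).1 ++ [cH (F t).2] <+: t.1)
    (hdisj : ∀ t t', t ≠ t' → (F t).1 = (F t').1 → Disjoint (E (F t).2) (E (F t').2)) :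
    hasFullRainbowMatching E cH := by
  by_contra hH
  obtain ⟨t, -, ht⟩ := exists_leaf_below_of_not_hasFullRainbowMatching hH hF hdisj q [] (by simp)
  simp at ht

section Copies

variable {ι κ K : Type} [Fintype ι] {q : ℕ}
  {N : Finset (List (Fin m))} (eC : κ ≃ N) (eL : List.Vector (Fin m) q ≃ K)
  {ψ : List (Fin m) × ι → List.Vector (Fin m) q}

theorem le_classSize_of_le_card_fiber [Fintype κ] [DecidableEq K]
    (hfiber : ∀ t, q ≤ #{e ∈ N ×ˢ univ | ψ e = t}) (i : K) :
    q ≤ classSize (fun p : κ × ι => eL (ψ ((eC p.1).1, p.2))) i := by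
  classical
  let node (p : κ × ι) : List (Fin m) × ι := ((eC p.1).1, p.2)
  calc q ≤ #{e ∈ N ×ˢ univ | ψ e = eL.symm i} := hfiber _
    _ ≤ #(image node {p | eL (ψ (node p)) = i}) := card_le_card fun e he => by
          obtain ⟨he, hψe⟩ := mem_filter.mp he
          refine mem_image.mpr ⟨(eC.symm ⟨e.1, (mem_product.mp he).1⟩, e.2), ?_, by simp [node]⟩
          simp [node, hψe]
    _ ≤ _ := card_image_le

theorem not_hasFullRainbowMatching_copies {V : Type} {E : ι → Finset V} {cH : ι → Fin m}
    (hH : ¬ hasFullRainbowMatching E cH)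
    (hψ : ∀ e ∈ N ×ˢ univ, e.1 ++ [cH e.2] <+: (ψ e).1) :
    ¬ hasFullRainbowMatching
      (fun p : κ × ι => (E p.2).map ⟨fun v => (p.1, v), fun x y h => by simpa using h⟩)
      (fun p => eL (ψ ((eC p.1).1, p.2))) := by
  rintro ⟨f, hf, hdisj⟩
  let node (p : κ × ι) : List (Fin m) × ι := ((eC p.1).1, p.2)
  have hψf (t : List.Vector (Fin m) q) : ψ (node (f (eL t))) = t := eL.injective (hf (eL t))
  refine hH (hasFullRainbowMatching_of_leaf_selection (fun t => node (f (eL t)))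
    (fun t => by
      simpa only [hψf] using hψ (node (f (eL t))) (mem_product.mpr ⟨(eC _).2, mem_univ _⟩))
    fun t t' hne hnode => ?_)
  have hcopy : (f (eL t)).1 = (f (eL t')).1 := eC.injective (Subtype.ext hnode)
  have := hdisj (eL t) (eL t') (eL.injective.ne hne)
  dsimp only at this
  rw [hcopy] at this
  exact (disjoint_map _).mp this

end Copies

end RainbowBlowup

/-- If `H` has an edge-coloring into `m` classes with no full rainbow matching and
`Σ_{i ∈ I} |F_i| ≥ q(|I|-1)+1` for every `I`, then some disjoint union `H^k` of `k ≥ 1`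
copies of `H` has an edge-coloring into `k(m-1)+1` classes, each of size at least `q`,
with no full rainbow matching. -/
theorem stmt12 {VH ιH : Type} [Fintype ιH] [DecidableEq ιH]
    (m q : ℕ) (hq : 1 ≤ q)
    (EH : ιH → Finset VH)
    (cH : ιH → Fin m)
    (hH : ¬ hasFullRainbowMatching EH cH)
    (hsum : ∀ I : Finset (Fin m),
      (q : ℤ) * ((I.card : ℤ) - 1) + 1 ≤ ∑ i ∈ I, (classSize cH i : ℤ)) :
    ∃ k : ℕ, 1 ≤ k ∧
      ∃ c : Fin k × ιH → Fin (k * (m - 1) + 1),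
        (∀ i, q ≤ classSize c i) ∧
        ¬ hasFullRainbowMatching
          (fun p : Fin k × ιH =>
            (EH p.2).map ⟨fun v => (p.1, v), fun x y h => by simpa using h⟩) c := by
  have hm : 0 < m := Nat.pos_of_ne_zero fun h => by
    subst h
    exact hH (hasFullRainbowMatching_of_isEmpty _ _)
  obtain ⟨ψ, -, hψ, hfiber⟩ := RainbowBlowup.exists_isRouting cH hm
    (fun d hd => sum_tsub_le_of_forall_sum_ge (classSize cH) hsum hd) q [] ∅ (by simp) (by simp)
    (by simp)
  set N := RainbowBlowup.subtree ([] : List (Fin m)) q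
  have hk : #N * (m - 1) + 1 = m ^ q := RainbowBlowup.card_subtree_mul_add_one hm [] q
  let eC : Fin #N ≃ N := N.equivFin.symm
  let eL : List.Vector (Fin m) q ≃ Fin (#N * (m - 1) + 1) :=
    Fintype.equivFinOfCardEq (by rw [card_vector, Fintype.card_fin, hk])
  have hroot : [] ∈ N :=
    RainbowBlowup.mem_subtree.mpr ⟨List.nil_prefix, by simpa using Nat.one_pos.trans_le hq⟩
  refine ⟨#N, card_pos.mpr ⟨[], hroot⟩, _,
    RainbowBlowup.le_classSize_of_le_card_fiber eC eL (by simpa using hfiber),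
    RainbowBlowup.not_hasFullRainbowMatching_copies eC eL hH hψ⟩
end

section
/- Let H be a multigraph with chromatic index χ' and edge family {e_1, …, e_m}, and let G be the disjoint union of χ' − 1 vertex-disjoint copies of H. For each i ∈ {1,…,m}, let E_i be the class consisting of the χ' − 1 copies of the edge e_i in G. Then E_1, …, E_m are the color classes of a proper edge-coloring of G, and G has no full rainbow matching with respect to E_1, …, E_m. -/
/-!
Copies of one edge lie in different components of `G`, so the coloring by edges of `H` is
proper. A full rainbow matching picks, for every edge of `H`, one of its `χ' - 1` copies;
recording which copy was picked is a proper edge-coloring of `H` with `χ' - 1` colors, since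
two edges of `H` sharing a vertex and sent to the same copy would meet in `G`.
-/

open Finset

/-- The chromatic index of the edge family `E`: the least number of matchings into which
the edge family can be partitioned. -/
def isChromaticIndex {V ι : Type} (E : ι → Finset V) (χ : ℕ) : Prop :=
  IsLeast {k : ℕ | ∃ c : ι → Fin k, properColoring E c} χ

open Function

def copyEdges {V ι : Type} (K : Type) (E : ι → Finset V) : K × ι → Finset (K × V) :=
  fun p => (E p.2).map (Embedding.sectR p.1 V)

section Copies

variable {V ι K : Type} (E : ι → Finset V)

theorem mem_copyEdges {p : K × ι} {x : K × V} :
    x ∈ copyEdges K E p ↔ x.1 = p.1 ∧ x.2 ∈ E p.2 := by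
  obtain ⟨k, v⟩ := x
  simp only [copyEdges, mem_map, Embedding.sectR_apply, Prod.mk.injEq]
  constructor
  · rintro ⟨w, hw, rfl, rfl⟩
    exact ⟨rfl, hw⟩
  · rintro ⟨rfl, hv⟩
    exact ⟨v, hv, rfl, rfl⟩

theorem disjoint_copyEdges_of_fst_ne {p q : K × ι} (h : p.1 ≠ q.1) :
    Disjoint (copyEdges K E p) (copyEdges K E q) :=
  disjoint_left.2 fun _ hp hq =>
    h (((mem_copyEdges E).1 hp).1.symm.trans ((mem_copyEdges E).1 hq).1)

theorem disjoint_copyEdges_of_fst_eq {p q : K × ι} (h : p.1 = q.1)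
    (hpq : Disjoint (copyEdges K E p) (copyEdges K E q)) : Disjoint (E p.2) (E q.2) := by
  rwa [copyEdges, copyEdges, ← h, disjoint_map] at hpq

theorem properColoring_copyEdges_snd : properColoring (copyEdges K E) Prod.snd :=
  fun _ _ hpq hsnd => disjoint_copyEdges_of_fst_ne E fun hfst => hpq (Prod.ext hfst hsnd)

theorem properColoring_of_hasFullRainbowMatching_copyEdges
    {f : ι → K × ι} (hf : ∀ a, (f a).2 = a)
    (hdisj : ∀ a b, a ≠ b → Disjoint (copyEdges K E (f a)) (copyEdges K E (f b))) :
    properColoring E fun a => (f a).1 := by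
  intro a b hab hfst
  simpa only [hf] using disjoint_copyEdges_of_fst_eq E hfst (hdisj a b hab)

end Copies

theorem isChromaticIndex.pos {V ι : Type} [Nonempty ι] {E : ι → Finset V} {χ : ℕ}
    (h : isChromaticIndex E χ) : 0 < χ := by
  obtain ⟨c, -⟩ := h.1
  exact Fin.pos (c (Classical.arbitrary ι))

/-- If `H` is a multigraph with chromatic index `χ'` and `G` is the disjoint union of
`χ' - 1` copies of `H`, colored so that the class of the edge `e_i` consists of all copies
of `e_i`, then this coloring is proper and `G` has no full rainbow matching. -/
theorem stmt16 {VH ιH : Type} [Nonempty ιH]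
    (χ' : ℕ)
    (EH : ιH → Finset VH)
    (hchrom : isChromaticIndex EH χ') :
    properColoring
      (fun p : Fin (χ' - 1) × ιH =>
        (EH p.2).map ⟨fun v => (p.1, v), fun x y h => by simpa using h⟩)
      (Prod.snd : Fin (χ' - 1) × ιH → ιH) ∧
    ¬ hasFullRainbowMatching
      (fun p : Fin (χ' - 1) × ιH =>
        (EH p.2).map ⟨fun v => (p.1, v), fun x y h => by simpa using h⟩)
      (Prod.snd : Fin (χ' - 1) × ιH → ιH) := by
  refine ⟨properColoring_copyEdges_snd EH, ?_⟩
  rintro ⟨f, hf, hdisj⟩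
  have hle : χ' ≤ χ' - 1 :=
    hchrom.2 ⟨_, properColoring_of_hasFullRainbowMatching_copyEdges EH hf hdisj⟩
  have hpos : 0 < χ' := hchrom.pos
  omega
end

section
/- For every even integer n ≥ 2, there exists a proper edge-coloring of the complete bipartite graph K_{n,n} into n color classes E_1, …, E_n, each a perfect matching of size n, such that K_{n,n} has no full rainbow matching with respect to E_1, …, E_n. -/
open Finset

/-! Colour the edge `(a, b)` of `K_{n,n}` by `a + b ∈ ℤ/n`. A full rainbow matching would be a
pair of permutations `σ, τ` of `ℤ/n` with `σ i + τ i = i` for all `i`; summing over `i` gives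
`∑ i = 2 ∑ i`, i.e. `∑ i = 0`. For even `n = 2m`, however, `∑ i = m ≠ 0` in `ℤ/n`. -/

theorem sum_univ_eq_zero_of_bijective_add_eq_self {G : Type*} [AddCommGroup G] [Fintype G]
    {σ τ : G → G} (hσ : σ.Bijective) (hτ : τ.Bijective) (h : ∀ g, σ g + τ g = g) :
    ∑ g : G, g = 0 := by
  have : ∑ g : G, g = ∑ g : G, g + ∑ g : G, g := calc
    ∑ g : G, g = ∑ g, (σ g + τ g) := Fintype.sum_congr _ _ fun g => (h g).symm
    _ = ∑ g, σ g + ∑ g, τ g := sum_add_distrib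
    _ = ∑ g : G, g + ∑ g : G, g := by rw [hσ.sum_comp fun g => g, hτ.sum_comp fun g => g]
  exact left_eq_add.mp this

open Fin.CommRing in
theorem Fin.sum_univ_eq_natCast_sum_range (n : ℕ) [NeZero n] :
    ∑ i : Fin n, i = (↑(∑ i ∈ range n, i) : Fin n) := by
  rw [Nat.cast_sum, ← Fin.sum_univ_eq_sum_range]
  simp only [Fin.cast_val_eq_self]

open Fin.CommRing in
theorem Fin.val_sum_univ_of_even {n : ℕ} [NeZero n] (hn : Even n) :
    (∑ i : Fin n, i).val = n / 2 := by
  obtain ⟨m, rfl⟩ := hn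
  obtain ⟨k, rfl⟩ : ∃ k, m = k + 1 :=
    Nat.exists_eq_add_one.mpr (Nat.pos_of_ne_zero fun h => NeZero.ne (m + m) (by omega))
  have gauss : ∑ i ∈ range (k + 1 + (k + 1)), i = k * (k + 1 + (k + 1)) + (k + 1) := by
    have := sum_range_id_mul_two (k + 1 + (k + 1))
    rw [show k + 1 + (k + 1) - 1 = 2 * k + 1 by omega] at this
    nlinarith
  rw [Fin.sum_univ_eq_natCast_sum_range, gauss, Fin.val_natCast, Nat.mul_add_mod_of_lt (by omega)]
  omega

theorem Fin.sum_univ_ne_zero_of_even {n : ℕ} [NeZero n] (hn : Even n) : ∑ i : Fin n, i ≠ 0 := by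
  intro h
  have hval := Fin.val_sum_univ_of_even hn
  rw [h, Fin.val_zero] at hval
  obtain ⟨m, rfl⟩ := hn
  have := NeZero.ne (m + m)
  omega

section CompleteBipartite

abbrev bipartiteEdge {α β : Type} [DecidableEq α] [DecidableEq β] (p : α × β) :
    Finset (α ⊕ β) :=
  {Sum.inl p.1, Sum.inr p.2}

theorem disjoint_bipartiteEdge_iff {α β : Type} [DecidableEq α] [DecidableEq β] {p q : α × β} :
    Disjoint (bipartiteEdge p) (bipartiteEdge q) ↔ p.1 ≠ q.1 ∧ p.2 ≠ q.2 := by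
  simp [bipartiteEdge, eq_comm]

variable {G : Type} [DecidableEq G]

abbrev addColoring [Add G] (p : G × G) : G := p.1 + p.2

theorem properColoring_addColoring [Add G] [IsCancelAdd G] :
    properColoring (bipartiteEdge (α := G) (β := G)) addColoring := by
  intro p q hpq (hcol : p.1 + p.2 = q.1 + q.2)
  rw [disjoint_bipartiteEdge_iff]
  constructor
  · intro h1
    exact hpq (Prod.ext h1 (add_left_cancel (by rwa [h1] at hcol)))
  · intro h2
    exact hpq (Prod.ext (add_right_cancel (by rwa [h2] at hcol)) h2)

theorem classSize_addColoring [AddGroup G] [Fintype G] (g : G) :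
    classSize addColoring g = Fintype.card G := by
  rw [classSize, ← Fintype.card_subtype]
  exact Fintype.card_congr
    { toFun := fun p => p.1.1
      invFun := fun a => ⟨(a, -a + g), add_neg_cancel_left a g⟩
      left_inv := fun p => Subtype.ext (Prod.ext rfl (eq_neg_add_of_add_eq p.2).symm)
      right_inv := fun _ => rfl }

theorem exists_addColoring_eq_and_mem_bipartiteEdge [AddGroup G] (g : G) (v : G ⊕ G) :
    ∃ p, addColoring p = g ∧ v ∈ bipartiteEdge p := by
  rcases v with a | b
  · exact ⟨(a, -a + g), add_neg_cancel_left a g, by simp⟩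
  · exact ⟨(g - b, b), sub_add_cancel g b, by simp⟩

theorem not_hasFullRainbowMatching_addColoring [AddCommGroup G] [Fintype G]
    (h : ∑ g : G, g ≠ 0) : ¬ hasFullRainbowMatching bipartiteEdge (addColoring (G := G)) := by
  rintro ⟨f, hcol, hdisj⟩
  have hfst : Function.Injective fun g => (f g).1 := fun g g' hg =>
    by_contra fun hne => (disjoint_bipartiteEdge_iff.mp (hdisj g g' hne)).1 hg
  have hsnd : Function.Injective fun g => (f g).2 := fun g g' hg =>
    by_contra fun hne => (disjoint_bipartiteEdge_iff.mp (hdisj g g' hne)).2 hg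
  exact h (sum_univ_eq_zero_of_bijective_add_eq_self (Finite.injective_iff_bijective.mp hfst)
    (Finite.injective_iff_bijective.mp hsnd) hcol)

end CompleteBipartite

/-- For every even `n ≥ 2` there is a proper edge-coloring of `K_{n,n}` into `n` color
classes, each a perfect matching of size `n`, with no full rainbow matching. -/
theorem stmt17 (n : ℕ) (hn : 2 ≤ n) (heven : n % 2 = 0) :
    ∃ c : Fin n × Fin n → Fin n,
      properColoring
        (fun p : Fin n × Fin n => ({Sum.inl p.1, Sum.inr p.2} : Finset (Fin n ⊕ Fin n))) c ∧
      (∀ i : Fin n, classSize c i = n) ∧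
      (∀ (i : Fin n) (v : Fin n ⊕ Fin n), ∃ a : Fin n × Fin n,
        c a = i ∧ v ∈ ({Sum.inl a.1, Sum.inr a.2} : Finset (Fin n ⊕ Fin n))) ∧
      ¬ hasFullRainbowMatching
        (fun p : Fin n × Fin n => ({Sum.inl p.1, Sum.inr p.2} : Finset (Fin n ⊕ Fin n))) c := by
  have : NeZero n := ⟨by omega⟩
  exact ⟨addColoring, properColoring_addColoring,
    fun i => (classSize_addColoring i).trans (Fintype.card_fin n),
    exists_addColoring_eq_and_mem_bipartiteEdge,
    not_hasFullRainbowMatching_addColoring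
      (Fin.sum_univ_ne_zero_of_even (Nat.even_iff.mpr heven))⟩
end

section
/- For every integer n ≥ 3 with n ≡ 3 (mod 4), there exist a multigraph G and a proper edge-coloring of G into n color classes E_1, …, E_n, each a perfect matching of G of size n + 1, such that G has no full rainbow matching with respect to E_1, …, E_n. -/
open Finset

/-!
Take `(n + 1) / 2` disjoint copies of `K₄`. Each of the `n` colors is, in every copy, one of the
three perfect matchings of `K₄`: color `0` uses the first, color `1` the second, all others the
third. Two disjoint edges of a `K₄` lie in the same perfect matching, so in a rainbow matching
colors `0` and `1` each occupy a copy alone and every other copy holds at most two colors. This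
leaves room for only `2 + 2 ((n + 1) / 2 - 2) = n - 1 < n` colors.
-/

/-- `k4Matching m` lists the two edges of the `m`-th perfect matching of `K₄`. -/
def k4Matching : Fin 3 → Fin 2 → Finset (Fin 4) :=
  ![![{0, 1}, {2, 3}], ![{0, 2}, {1, 3}], ![{0, 3}, {1, 2}]]

lemma card_k4Matching (m : Fin 3) (h : Fin 2) : (k4Matching m h).card = 2 := by
  revert m h; decide

lemma exists_mem_k4Matching (m : Fin 3) (x : Fin 4) : ∃ h, x ∈ k4Matching m h := by
  revert m x; decide

lemma disjoint_k4Matching_iff (m m' : Fin 3) (h h' : Fin 2) :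
    Disjoint (k4Matching m h) (k4Matching m' h') ↔ m = m' ∧ h ≠ h' := by
  revert m m' h h'; decide

section Relabel

variable {V W ι ι' κ : Type} (σ : V ↪ W) (e : ι' ≃ ι) (E : ι → Finset V) (c : ι → κ)

lemma properColoring_relabel :
    properColoring (fun a => (E (e a)).map σ) (c ∘ e) ↔ properColoring E c := by
  simp only [properColoring, Function.comp_apply, disjoint_map, e.forall_congr_left,
    e.apply_symm_apply, ne_eq, EmbeddingLike.apply_eq_iff_eq]

lemma hasFullRainbowMatching_relabel :
    hasFullRainbowMatching (fun a => (E (e a)).map σ) (c ∘ e) ↔ hasFullRainbowMatching E c := by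
  constructor
  · rintro ⟨f, hcol, hdisj⟩
    exact ⟨e ∘ f, hcol, fun i j hij => (disjoint_map σ).mp (hdisj i j hij)⟩
  · rintro ⟨f, hcol, hdisj⟩
    refine ⟨e.symm ∘ f, fun i => ?_, fun i j hij => ?_⟩
    · simpa using hcol i
    · simpa using hdisj i j hij

lemma classSize_comp_equiv [Fintype ι] [Fintype ι'] [DecidableEq κ] (i : κ) :
    classSize (c ∘ e) i = classSize c i :=
  card_equiv e (by simp)

end Relabel

section Blocks

variable {κ : Type} (k : ℕ) (p : κ → Fin 3)

/-- `k` disjoint copies of `K₄`; the edge `(i, b, h)` has color `i` and is edge `h` of the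
perfect matching `p i` of block `b`. -/
def blockEdge (a : κ × Fin k × Fin 2) : Finset (Fin k × Fin 4) :=
  {a.2.1} ×ˢ k4Matching (p a.1) a.2.2

variable {k p}

lemma card_blockEdge (a : κ × Fin k × Fin 2) : (blockEdge k p a).card = 2 := by
  simp [blockEdge, card_k4Matching]

lemma disjoint_blockEdge_iff {a a' : κ × Fin k × Fin 2} :
    Disjoint (blockEdge k p a) (blockEdge k p a') ↔
      a.2.1 ≠ a'.2.1 ∨ (p a.1 = p a'.1 ∧ a.2.2 ≠ a'.2.2) := by
  simp only [blockEdge, disjoint_product, disjoint_singleton, disjoint_k4Matching_iff]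

lemma properColoring_blockEdge : properColoring (blockEdge k p) Prod.fst := by
  rintro ⟨i, b, h⟩ ⟨i', b', h'⟩ hne (rfl : i = i')
  rw [disjoint_blockEdge_iff]
  by_cases hb : b = b'
  · subst hb
    exact Or.inr ⟨rfl, fun hh : h = h' => hne (hh ▸ rfl)⟩
  · exact Or.inl hb

lemma classSize_fst [Fintype κ] [DecidableEq κ] (i : κ) :
    classSize (Prod.fst : κ × Fin k × Fin 2 → κ) i = 2 * k := by
  have hclass : univ.filter (fun a : κ × Fin k × Fin 2 => a.1 = i) = {i} ×ˢ univ := by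
    ext; simp only [mem_filter, mem_univ, true_and, mem_product,
      mem_singleton, and_true]
  rw [classSize, hclass, card_product]
  simp [mul_comm]

lemma exists_blockEdge_mem (i : κ) (v : Fin k × Fin 4) :
    ∃ a : κ × Fin k × Fin 2, a.1 = i ∧ v ∈ blockEdge k p a := by
  obtain ⟨h, hh⟩ := exists_mem_k4Matching (p i) v.2
  exact ⟨(i, v.1, h), rfl, by simpa [blockEdge] using hh⟩

end Blocks

section Rainbow

variable {κ : Type} {k : ℕ} {p : κ → Fin 3} {f : κ → κ × Fin k × Fin 2}

lemma pattern_eq_of_block_eq (hcol : ∀ i, (f i).1 = i)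
    (hdisj : ∀ i j, i ≠ j → Disjoint (blockEdge k p (f i)) (blockEdge k p (f j)))
    {i j : κ} (hij : i ≠ j) (hb : (f i).2.1 = (f j).2.1) :
    p i = p j ∧ (f i).2.2 ≠ (f j).2.2 := by
  have h := disjoint_blockEdge_iff.mp (hdisj i j hij)
  rw [hcol, hcol] at h
  exact h.resolve_left (not_not.mpr hb)

/-- A color whose pattern no other color uses occupies its block alone, so the other slot of
that block stays empty. -/
lemma card_add_two_le_of_hasFullRainbowMatching [Fintype κ] {i₀ i₁ : κ} (h₀₁ : i₀ ≠ i₁)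
    (h₀ : ∀ j, p j = p i₀ → j = i₀) (h₁ : ∀ j, p j = p i₁ → j = i₁)
    (hr : hasFullRainbowMatching (blockEdge k p) Prod.fst) : Fintype.card κ + 2 ≤ 2 * k := by
  obtain ⟨f, hcol, hdisj⟩ := hr
  have hsame : ∀ {i j}, i ≠ j → (f i).2.1 = (f j).2.1 → p i = p j ∧ (f i).2.2 ≠ (f j).2.2 :=
    pattern_eq_of_block_eq hcol hdisj
  let slot : κ → Fin k × Fin 2 := fun i => (f i).2
  let partner : κ → Fin k × Fin 2 := fun i => ((f i).2.1, (f i).2.2 + 1)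
  have hslot_inj : Function.Injective slot := by
    intro i j hij
    by_contra hne
    exact (hsame hne (congrArg Prod.fst hij)).2 (congrArg Prod.snd hij)
  have hpartner : ∀ i, (∀ j, p j = p i → j = i) → partner i ∉ univ.image slot := by
    intro i hi hmem
    obtain ⟨j, -, hj⟩ := mem_image.mp hmem
    obtain ⟨hb, hh⟩ := Prod.ext_iff.mp hj
    by_cases hji : j = i
    · subst hji
      have hrev : ∀ h : Fin 2, h + 1 ≠ h := by decide
      exact hrev _ hh.symm
    · exact hji (hi j (hsame hji hb).1)
  have hpartner_ne : partner i₀ ≠ partner i₁ := by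
    intro h
    have hb : (f i₀).2.1 = (f i₁).2.1 := (Prod.ext_iff.mp h).1
    exact h₀₁ (h₀ i₁ (hsame h₀₁ hb).1.symm).symm
  calc Fintype.card κ + 2
      = (univ.image slot ∪ {partner i₀, partner i₁}).card := by
        rw [card_union_of_disjoint, card_image_of_injective _ hslot_inj,
          card_pair hpartner_ne, card_univ]
        simp only [disjoint_insert_right, disjoint_singleton_right]
        exact ⟨hpartner i₀ h₀, hpartner i₁ h₁⟩
    _ ≤ 2 * k := by
        simpa [mul_comm] using card_le_univ (univ.image slot ∪ {partner i₀, partner i₁})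

end Rainbow

theorem stmt18_general (n : ℕ) (hmod : n % 4 = 3) :
    ∃ (N M : ℕ) (E : Fin M → Finset (Fin N)) (c : Fin M → Fin n),
      (∀ a, (E a).card = 2) ∧
      properColoring E c ∧
      (∀ i : Fin n, classSize c i = n + 1) ∧
      (∀ (i : Fin n) (v : Fin N), ∃ a, c a = i ∧ v ∈ E a) ∧
      ¬ hasFullRainbowMatching E c := by
  set k := (n + 1) / 2
  have hk : 2 * k = n + 1 := by omega
  let p : Fin n → Fin 3 := fun i => ⟨min i 2, by omega⟩
  let σ := (Fintype.equivFin (Fin k × Fin 4)).toEmbedding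
  let e := (Fintype.equivFin (Fin n × Fin k × Fin 2)).symm
  refine ⟨_, _, fun a => (blockEdge k p (e a)).map σ, Prod.fst ∘ e, fun a => ?_,
    (properColoring_relabel σ e _ _).mpr properColoring_blockEdge, fun i => ?_, fun i v => ?_,
    (hasFullRainbowMatching_relabel σ e _ _).not.mpr ?_⟩
  · rw [card_map, card_blockEdge]
  · rw [classSize_comp_equiv, classSize_fst, hk]
  · obtain ⟨a, rfl, ha⟩ := exists_blockEdge_mem (p := p) i ((Fintype.equivFin _).symm v)
    exact ⟨e.symm a, by simp, by simpa [σ] using ha⟩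
  · intro hr
    have hunique : ∀ i : Fin n, i.val < 2 → ∀ j, p j = p i → j = i := by
      intro i hi j hj
      simp only [p, Fin.ext_iff] at hj ⊢
      omega
    have hcard := card_add_two_le_of_hasFullRainbowMatching (i₀ := ⟨0, by omega⟩)
      (i₁ := ⟨1, by omega⟩) (Fin.ne_of_val_ne zero_ne_one)
      (hunique _ zero_lt_two) (hunique _ one_lt_two) hr
    rw [Fintype.card_fin] at hcard
    omega

/-- For every `n ≥ 3` with `n ≡ 3 (mod 4)` there are a multigraph `G` and a proper
edge-coloring of `G` into `n` color classes, each a perfect matching of size `n + 1`,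
with no full rainbow matching. -/
theorem stmt18 (n : ℕ) (hn : 3 ≤ n) (hmod : n % 4 = 3) :
    ∃ (N M : ℕ) (E : Fin M → Finset (Fin N)) (c : Fin M → Fin n),
      (∀ a, (E a).card = 2) ∧
      properColoring E c ∧
      (∀ i : Fin n, classSize c i = n + 1) ∧
      (∀ (i : Fin n) (v : Fin N), ∃ a, c a = i ∧ v ∈ E a) ∧
      ¬ hasFullRainbowMatching E c :=
  stmt18_general n hmod
end

section
/- For every integer m ≥ 2, there exists a proper edge-coloring of the disjoint union G of two vertex-disjoint copies of the complete graph K_{2^m} into 2^m − 1 color classes E_1, …, E_{2^m − 1}, each a perfect matching of G of size 2^m, such that G has no full rainbow matching with respect to E_1, …, E_{2^m − 1}. -/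
open Finset

/-- The disjoint union of two copies of the complete graph `K_{2^m}`: vertices are
`Bool × Fin (2^m)`, and edges are indexed by a component together with a 2-element vertex
subset of that component. -/
def twoCompleteGraphs (m : ℕ) :
    Bool × {s : Finset (Fin (2 ^ m)) // s.card = 2} → Finset (Bool × Fin (2 ^ m)) :=
  fun p => (p.2 : Finset (Fin (2 ^ m))).map ⟨fun v => (p.1, v), fun x y h => by simpa using h⟩

/-!
Label the vertices of each copy of `K_{2^m}` bijectively by `𝔽₂^m` and color the edge `{x, y}`
by `x + y ≠ 0`; every color class then restricts to a perfect matching of each copy.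
In a full rainbow matching each copy carries a matching, hence has an even number of uncovered
vertices, and `2^m - 1` edges leave exactly two vertices uncovered: so both lie in the same copy,
with distinct labels `u ≠ w`. The colors of the matching sum to the sum of all nonzero vectors,
which is `0` for `m ≥ 2`. On the other hand this sum is the sum of the labels of the covered
vertices; as every vector labels one vertex of each copy, that is `u + w ≠ 0`.
-/

open Function

section ElementaryAbelian

variable {V κ G : Type*} [DecidableEq V] [AddCommGroup G]

theorem Finset.exists_eq_pair_of_mem {s : Finset V} {v : V} (hs : s.card = 2) (hv : v ∈ s) :
    ∃ w, w ≠ v ∧ s = {v, w} := by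
  obtain ⟨w, hw⟩ := card_eq_one.1 (by rw [card_erase_of_mem hv, hs] : (s.erase v).card = 1)
  refine ⟨w, ne_of_mem_erase (hw ▸ mem_singleton_self w), ?_⟩
  rw [← insert_erase hv, hw]

theorem eq_of_sum_eq_of_mem {φ : V → G} (hφ : Injective φ) {s t : Finset V} {v : V}
    (hs : s.card = 2) (ht : t.card = 2) (hvs : v ∈ s) (hvt : v ∈ t)
    (h : ∑ x ∈ s, φ x = ∑ x ∈ t, φ x) : s = t := by
  obtain ⟨x, hxv, rfl⟩ := exists_eq_pair_of_mem hs hvs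
  obtain ⟨y, hyv, rfl⟩ := exists_eq_pair_of_mem ht hvt
  rw [sum_pair hxv.symm, sum_pair hyv.symm, add_right_inj] at h
  rw [hφ h]

variable [Module (ZMod 2) G]

theorem sum_ne_zero_of_card_eq_two {φ : V → G} (hφ : Injective φ) {s : Finset V}
    (hs : s.card = 2) : ∑ x ∈ s, φ x ≠ 0 := by
  obtain ⟨x, y, hxy, rfl⟩ := card_eq_two.1 hs
  rw [sum_pair hxy, ← ZModModule.sub_eq_add, sub_ne_zero]
  exact hφ.ne hxy

theorem exists_card_eq_two_sum_eq (φ : V ≃ G) (v : V) {d : G} (hd : d ≠ 0) :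
    ∃ s : Finset V, s.card = 2 ∧ v ∈ s ∧ ∑ x ∈ s, φ x = d := by
  set w := φ.symm (φ v + d)
  have hvw : v ≠ w := fun h => hd (by simpa [w] using congrArg φ h)
  refine ⟨{v, w}, card_pair hvw, mem_insert_self _ _, ?_⟩
  rw [sum_pair hvw, Equiv.apply_symm_apply, ← add_assoc, ZModModule.add_self, zero_add]

theorem sum_univ_pi_zmod_two {ι : Type*} [Fintype ι] [DecidableEq ι]
    (hι : 1 < Fintype.card ι) : ∑ g : ι → ZMod 2, g = 0 := by
  funext j
  obtain ⟨k, hkj⟩ := Fintype.exists_ne_of_one_lt_card hι j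
  rw [Finset.sum_apply, Pi.zero_apply]
  -- Adding the `k`-th basis vector pairs off the vectors without changing their `j`-th coordinate.
  refine sum_involution (fun g _ => g + Pi.single k 1) (fun g _ => ?_) (fun g _ _ h => ?_)
    (fun _ _ => mem_univ _) (fun g _ => ?_)
  · simp [hkj.symm, ZModModule.add_self]
  · simpa using congrFun h k
  · simp [add_assoc, ZModModule.add_self]

variable [Fintype V] {φ : V → G}

theorem sum_compl_eq_sum (hφ : ∑ v, φ v = 0) (T : Finset V) :
    ∑ v ∈ Tᶜ, φ v = ∑ v ∈ T, φ v := by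
  rw [← ZModModule.neg_eq_self (∑ v ∈ T, φ v), eq_neg_iff_add_eq_zero, sum_compl_add_sum, hφ]

theorem sum_sum_eq_sum_compl_biUnion (hφ : ∑ v, φ v = 0) {e : κ → Finset V} {A : Finset κ}
    (hA : (A : Set κ).PairwiseDisjoint e) :
    ∑ i ∈ A, ∑ v ∈ e i, φ v = ∑ v ∈ (A.biUnion e)ᶜ, φ v := by
  rw [sum_compl_eq_sum hφ, sum_biUnion hA]

theorem card_compl_biUnion_add {e : κ → Finset V} {A : Finset κ} (he : ∀ i ∈ A, (e i).card = 2)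
    (hA : (A : Set κ).PairwiseDisjoint e) :
    ((A.biUnion e)ᶜ).card + 2 * A.card = Fintype.card V := by
  rw [← card_compl_add_card (A.biUnion e), card_biUnion hA, sum_congr rfl he, sum_const,
    smul_eq_mul, mul_comm]

theorem sum_sum_ne_zero_of_two_matchings [Fintype κ] (hφ : Injective φ) (hsum : ∑ v, φ v = 0)
    (hV : Even (Fintype.card V)) {e : κ → Finset V} (he : ∀ i, (e i).card = 2) (side : κ → Bool)
    (hdisj : ∀ i j, i ≠ j → side i = side j → Disjoint (e i) (e j))
    (hκ : Fintype.card κ + 1 = Fintype.card V) :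
    ∑ i, ∑ v ∈ e i, φ v ≠ 0 := by
  set A : Bool → Finset κ := fun b => univ.filter (side · = b)
  have hA (b : Bool) : (A b : Set κ).PairwiseDisjoint e := fun i hi j hj hij =>
    hdisj i j hij ((mem_filter.1 hi).2.trans (mem_filter.1 hj).2.symm)
  have hsplit : (A true).card + (A false).card = Fintype.card κ := by
    rw [← Fintype.sum_bool fun b => (A b).card, ← card_univ]
    exact (card_eq_sum_card_fiberwise fun _ _ => mem_univ _).symm
  have htrue := card_compl_biUnion_add (fun i _ => he i) (hA true)
  have hfalse := card_compl_biUnion_add (fun i _ => he i) (hA false)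
  rw [← sum_fiberwise univ side, Fintype.sum_bool, sum_sum_eq_sum_compl_biUnion hsum (hA true),
    sum_sum_eq_sum_compl_biUnion hsum (hA false)]
  obtain ⟨p, hp⟩ := hV
  -- The two sets of unmatched vertices have even sizes adding up to `2`.
  rcases (by omega : ((A true).biUnion e)ᶜ.card = 0 ∧ ((A false).biUnion e)ᶜ.card = 2 ∨
      ((A true).biUnion e)ᶜ.card = 2 ∧ ((A false).biUnion e)ᶜ.card = 0) with ⟨h0, h2⟩ | ⟨h2, h0⟩
  · rw [card_eq_zero.1 h0, sum_empty, zero_add]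
    exact sum_ne_zero_of_card_eq_two hφ h2
  · rw [card_eq_zero.1 h0, sum_empty, add_zero]
    exact sum_ne_zero_of_card_eq_two hφ h2

end ElementaryAbelian

theorem classSize_mul_eq_card {V ι κ : Type} [Fintype V] [DecidableEq V] [Fintype ι]
    [DecidableEq κ] {E : ι → Finset V} {c : ι → κ} {k : ℕ} (hE : ∀ a, (E a).card = k)
    (hc : properColoring E c) {i : κ} (hcov : ∀ v, ∃ a, c a = i ∧ v ∈ E a) :
    classSize c i * k = Fintype.card V := by
  set A := univ.filter fun a => c a = i
  have hA : (A : Set ι).PairwiseDisjoint E := fun a ha b hb hab =>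
    hc a b hab ((mem_filter.1 ha).2.trans (mem_filter.1 hb).2.symm)
  have hunion : A.biUnion E = univ := eq_univ_of_forall fun v => by
    obtain ⟨a, ha, hv⟩ := hcov v
    exact mem_biUnion.2 ⟨a, by simpa [A] using ha, hv⟩
  rw [classSize, ← card_univ, ← hunion, card_biUnion hA, sum_congr rfl (fun a _ => hE a),
    sum_const, smul_eq_mul]

section TwoCompleteGraphs

variable {m : ℕ}

theorem mem_twoCompleteGraphs {a : Bool × {s : Finset (Fin (2 ^ m)) // s.card = 2}}
    {x : Bool × Fin (2 ^ m)} :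
    x ∈ twoCompleteGraphs m a ↔ x.1 = a.1 ∧ x.2 ∈ (a.2 : Finset (Fin (2 ^ m))) := by
  obtain ⟨β, v⟩ := x
  rw [twoCompleteGraphs, mem_map]
  constructor
  · rintro ⟨w, hw, h⟩
    obtain ⟨rfl, rfl⟩ := Prod.mk.inj h
    exact ⟨rfl, hw⟩
  · rintro ⟨rfl, hv⟩
    exact ⟨v, hv, rfl⟩

theorem card_twoCompleteGraphs (a : Bool × {s : Finset (Fin (2 ^ m)) // s.card = 2}) :
    (twoCompleteGraphs m a).card = 2 := by
  simp [twoCompleteGraphs, a.2.2]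

theorem Disjoint.of_twoCompleteGraphs {a b : Bool × {s : Finset (Fin (2 ^ m)) // s.card = 2}}
    (h : Disjoint (twoCompleteGraphs m a) (twoCompleteGraphs m b)) (hab : a.1 = b.1) :
    Disjoint (a.2 : Finset (Fin (2 ^ m))) b.2 :=
  disjoint_left.2 fun x hxa hxb => disjoint_left.1 h
    (mem_twoCompleteGraphs (x := (a.1, x)) |>.2 ⟨rfl, hxa⟩) (mem_twoCompleteGraphs.2 ⟨hab, hxb⟩)

variable {G : Type*} [AddCommGroup G] [Module (ZMod 2) G] (φ : Fin (2 ^ m) ≃ G)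
  (ψ : {g : G // g ≠ 0} ≃ Fin (2 ^ m - 1))

noncomputable def labelColoring :
    Bool × {s : Finset (Fin (2 ^ m)) // s.card = 2} → Fin (2 ^ m - 1) :=
  fun a => ψ ⟨∑ x ∈ a.2.1, φ x, sum_ne_zero_of_card_eq_two φ.injective a.2.2⟩

theorem labelColoring_eq_iff {a : Bool × {s : Finset (Fin (2 ^ m)) // s.card = 2}}
    {i : Fin (2 ^ m - 1)} : labelColoring φ ψ a = i ↔ ∑ x ∈ a.2.1, φ x = ψ.symm i := by
  rw [labelColoring, ← Equiv.eq_symm_apply, Subtype.ext_iff]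

theorem properColoring_labelColoring :
    properColoring (twoCompleteGraphs m) (labelColoring φ ψ) := by
  intro a b hab hc
  refine disjoint_left.2 fun x hxa hxb => hab ?_
  rw [mem_twoCompleteGraphs] at hxa hxb
  have hsum : ∑ x ∈ a.2.1, φ x = ∑ x ∈ b.2.1, φ x :=
    ((labelColoring_eq_iff φ ψ).1 hc).trans ((labelColoring_eq_iff φ ψ).1 rfl).symm
  exact Prod.ext (hxa.1.symm.trans hxb.1)
    (Subtype.ext (eq_of_sum_eq_of_mem φ.injective a.2.2 b.2.2 hxa.2 hxb.2 hsum))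

theorem exists_labelColoring_eq_and_mem (i : Fin (2 ^ m - 1)) (x : Bool × Fin (2 ^ m)) :
    ∃ a, labelColoring φ ψ a = i ∧ x ∈ twoCompleteGraphs m a := by
  obtain ⟨s, hs, hxs, hsum⟩ := exists_card_eq_two_sum_eq φ x.2 (ψ.symm i).2
  exact ⟨(x.1, ⟨s, hs⟩), (labelColoring_eq_iff φ ψ).2 hsum, mem_twoCompleteGraphs.2 ⟨rfl, hxs⟩⟩

theorem classSize_labelColoring (i : Fin (2 ^ m - 1)) :
    classSize (labelColoring φ ψ) i = 2 ^ m := by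
  have := classSize_mul_eq_card card_twoCompleteGraphs (properColoring_labelColoring φ ψ)
    (exists_labelColoring_eq_and_mem φ ψ i)
  simp only [Fintype.card_prod, Fintype.card_bool, Fintype.card_fin] at this
  omega

theorem not_hasFullRainbowMatching_labelColoring [Fintype G] (hm : m ≠ 0)
    (hG : ∑ g : G, g = 0) :
    ¬ hasFullRainbowMatching (twoCompleteGraphs m) (labelColoring φ ψ) := by
  classical
  rintro ⟨f, hf, hdisj⟩
  have htotal : ∑ i, ∑ x ∈ (f i).2.1, φ x = 0 := by
    simp_rw [fun i => (labelColoring_eq_iff φ ψ).1 (hf i)]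
    rw [ψ.symm.sum_comp (fun g => (g : G)),
      ← sum_subtype (univ.filter fun g : G => g ≠ 0) (by simp) fun g => g, sum_filter_ne_zero, hG]
  refine sum_sum_ne_zero_of_two_matchings φ.injective ((φ.sum_comp fun g => g).trans hG) ?_
    (fun i => (f i).2.2) (fun i => (f i).1)
    (fun i j hij h => (hdisj i j hij).of_twoCompleteGraphs h) ?_ htotal
  · simp [Nat.even_pow, hm]
  · simp [Nat.sub_add_cancel Nat.one_le_two_pow]

end TwoCompleteGraphs

/-- For every `m ≥ 2` there is a proper edge-coloring of the disjoint union of two copies of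
`K_{2^m}` into `2^m - 1` color classes, each a perfect matching of size `2^m`, with no full
rainbow matching. -/
theorem stmt19 (m : ℕ) (hm : 2 ≤ m) :
    ∃ c : (Bool × {s : Finset (Fin (2 ^ m)) // s.card = 2}) → Fin (2 ^ m - 1),
      properColoring (twoCompleteGraphs m) c ∧
      (∀ i, classSize c i = 2 ^ m) ∧
      (∀ (i : Fin (2 ^ m - 1)) (v : Bool × Fin (2 ^ m)),
        ∃ a, c a = i ∧ v ∈ twoCompleteGraphs m a) ∧
      ¬ hasFullRainbowMatching (twoCompleteGraphs m) c := by
  have hcard : Fintype.card (Fin m → ZMod 2) = 2 ^ m := by simp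
  have hcard' : Fintype.card {g : Fin m → ZMod 2 // g ≠ 0} = 2 ^ m - 1 := by
    simp [Fintype.card_subtype_compl]
  let φ := (Fintype.equivFinOfCardEq hcard).symm
  let ψ := Fintype.equivFinOfCardEq hcard'
  exact ⟨labelColoring φ ψ, properColoring_labelColoring φ ψ, classSize_labelColoring φ ψ,
    exists_labelColoring_eq_and_mem φ ψ,
    not_hasFullRainbowMatching_labelColoring φ ψ (by omega)
      (sum_univ_pi_zmod_two (ι := Fin m) (by simpa))⟩
end
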